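/- arXiv:1811.02487 — 5 statements merged into one kernel-verified Lean document; each statement's English description precedes it below -/
import Mathlib

section
/- Let L ⊂ S² be a lune (the intersection of two distinct non-opposite closed hemispheres) of thickness at most π/2, bounded by semicircles Q and Q'. For all points u, v, z on Q with v lying on the arc uz, and for every point q ∈ L, the spherical distance satisfies |qv| ≤ max{|qu|, |qz|}. -/
open scoped RealInnerProductSpace
open Real Set

noncomputable section

abbrev E3 := EuclideanSpace ℝ (Fin 3)

/-- Geodesic (angular) distance on the unit sphere. -/
def sdist (x y : E3) : ℝ := Real.arccos ⟪x, y⟫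

/-- The shorter great-circle arc joining `a` and `b` (as unit vectors in their
nonnegative cone). -/
def Arc (a b : E3) : Set E3 :=
  {z | ‖z‖ = 1 ∧ ∃ s t : ℝ, 0 ≤ s ∧ 0 ≤ t ∧ z = s • a + t • b}

/-- Spherical convexity: a set of unit vectors, with no antipodal pair,
containing the minor arc between any two of its points. -/
def SphConvex (C : Set E3) : Prop :=
  (∀ x ∈ C, ‖x‖ = 1) ∧ (∀ x ∈ C, -x ∉ C) ∧
  ∀ x ∈ C, ∀ y ∈ C, Arc x y ⊆ C

/-- Interior relative to the unit sphere. -/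
def sphInterior (C : Set E3) : Set E3 :=
  {x | ‖x‖ = 1 ∧ ∃ ε > 0, ∀ y : E3, ‖y‖ = 1 → sdist x y < ε → y ∈ C}

/-- A spherically convex body: closed, spherically convex, with nonempty
interior relative to the sphere. -/
def IsBody (C : Set E3) : Prop :=
  SphConvex C ∧ IsClosed C ∧ (sphInterior C).Nonempty

/-- Boundary relative to the sphere (for closed sets on the sphere). -/
def sphBd (C : Set E3) : Set E3 := C \ sphInterior C

/-- Closed hemisphere with center `c`. -/
def Hemi (c : E3) : Set E3 := {x | ‖x‖ = 1 ∧ 0 ≤ ⟪c, x⟫}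

/-- `g` and `h` are centers of two distinct non-opposite hemispheres. -/
def IsLunePair (g h : E3) : Prop := ‖g‖ = 1 ∧ ‖h‖ = 1 ∧ g ≠ h ∧ g ≠ -h

/-- The lune determined by hemispheres with centers `g` and `h`. -/
def Lune (g h : E3) : Set E3 := Hemi g ∩ Hemi h

/-- The semicircle bounding `Lune g h` which is contained in `Hemi g`
(i.e. the half of the great circle bounding `Hemi h` lying in `Hemi g`). -/
def SemiIn (g h : E3) : Set E3 := {x | ‖x‖ = 1 ∧ ⟪h, x⟫ = 0 ∧ 0 ≤ ⟪g, x⟫}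

/-- The center of the semicircle `SemiIn g h`. -/
def scCenter (g h : E3) : E3 := ‖g - ⟪h, g⟫ • h‖⁻¹ • (g - ⟪h, g⟫ • h)

/-- Thickness of the lune `Lune g h`: the distance between the centers of its
two bounding semicircles. -/
def lThick (g h : E3) : ℝ := sdist (scCenter g h) (scCenter h g)

/-- The hemisphere with center `g` supports `C`. -/
def Supports (C : Set E3) (g : E3) : Prop :=
  ‖g‖ = 1 ∧ C ⊆ Hemi g ∧ ∃ p ∈ C, ⟪g, p⟫ = 0

/-- The width of `C` determined by a supporting hemisphere `Hemi g`. -/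
def widthAt (C : Set E3) (g : E3) : ℝ :=
  sInf {w | ∃ h, Supports C h ∧ IsLunePair g h ∧ lThick g h = w}

/-- The thickness of a convex body `C`. -/
def thickness (C : Set E3) : ℝ :=
  sInf {w | ∃ g, Supports C g ∧ widthAt C g = w}

/-- A reduced spherical convex body. -/
def Reduced (R : Set E3) : Prop :=
  IsBody R ∧ ∀ Z, IsBody Z → Z ⊆ R → Z ≠ R → thickness Z < thickness R

/-- Geodesic diameter of a set on the sphere. -/
def sDiam (A : Set E3) : ℝ := sSup {d | ∃ x ∈ A, ∃ y ∈ A, sdist x y = d}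

/-- The set of extreme points of `C`. -/
def extremePts (C : Set E3) : Set E3 := {e ∈ C | SphConvex (C \ {e})}

/-- The spherical disk of center `c` and radius `ρ`. -/
def Disk (c : E3) (ρ : ℝ) : Set E3 := {x | ‖x‖ = 1 ∧ sdist c x ≤ ρ}

/-- A quarter of a disk of radius `ρ`: the intersection of the disk with one of
the four quadrants determined by two orthogonal great circles through its
center. -/
def IsQuarterDisk (Q : Set E3) (ρ : ℝ) : Prop :=
  ∃ c u v : E3, ‖c‖ = 1 ∧ ‖u‖ = 1 ∧ ‖v‖ = 1 ∧
    ⟪u, v⟫ = 0 ∧ ⟪u, c⟫ = 0 ∧ ⟪v, c⟫ = 0 ∧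
    Q = Disk c ρ ∩ {x | 0 ≤ ⟪u, x⟫} ∩ {x | 0 ≤ ⟪v, x⟫}

/-- A body of constant width. -/
def ConstWidth (C : Set E3) : Prop :=
  IsBody C ∧ ∃ w, ∀ g, Supports C g → widthAt C g = w

/-- Spherical convex hull. -/
def sphHull (A : Set E3) : Set E3 := ⋂₀ {C | SphConvex C ∧ A ⊆ C}

lemma mkangle (x1 x2 : ℝ) (hx : x1^2+x2^2 = 1) (hx1 : 0 ≤ x1) :
    Real.sin (Real.arcsin x2) = x2 ∧ Real.cos (Real.arcsin x2) = x1 := by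
  have hb1 : -1 ≤ x2 := by nlinarith
  have hb2 : x2 ≤ 1 := by nlinarith
  refine ⟨Real.sin_arcsin hb1 hb2, ?_⟩
  rw [Real.cos_arcsin]
  have : 1 - x2^2 = x1^2 := by nlinarith
  rw [this, Real.sqrt_sq hx1]

lemma horder (a1 a2 b1 b2 : ℝ) (ha : a1^2+a2^2 = 1) (hb : b1^2+b2^2 = 1)
    (ha1 : 0 ≤ a1) (hb1 : 0 ≤ b1) (hd : 0 ≤ a1*b2 - a2*b1)
    (hn : ¬(b1 = -a1 ∧ b2 = -a2)) :
    Real.arcsin a2 ≤ Real.arcsin b2 := by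
  obtain ⟨hsa, hca⟩ := mkangle a1 a2 ha ha1
  obtain ⟨hsb, hcb⟩ := mkangle b1 b2 hb hb1
  by_contra hlt
  push_neg at hlt
  have hsin : Real.sin (Real.arcsin b2 - Real.arcsin a2) = a1*b2 - a2*b1 := by
    rw [Real.sin_sub, hsa, hca, hsb, hcb]; ring
  rcases eq_or_lt_of_le (by
      linarith [Real.arcsin_le_pi_div_two a2, Real.neg_pi_div_two_le_arcsin b2] :
      -π ≤ Real.arcsin b2 - Real.arcsin a2) with he | hgt
  · have h1 : Real.arcsin a2 = π/2 := by
      linarith [Real.arcsin_le_pi_div_two a2, Real.neg_pi_div_two_le_arcsin b2]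
    have h2 : Real.arcsin b2 = -(π/2) := by
      linarith [Real.arcsin_le_pi_div_two a2, Real.neg_pi_div_two_le_arcsin b2]
    apply hn
    have ha2 : a2 = 1 := by rw [← hsa, h1, Real.sin_pi_div_two]
    have hb2' : b2 = -1 := by rw [← hsb, h2, Real.sin_neg, Real.sin_pi_div_two]
    have ha1' : a1 = 0 := by nlinarith
    have hb1' : b1 = 0 := by nlinarith
    exact ⟨by rw [ha1', hb1']; ring, by rw [ha2, hb2']⟩
  · have : Real.sin (Real.arcsin b2 - Real.arcsin a2) < 0 :=
      Real.sin_neg_of_neg_of_neg_pi_lt (by linarith) hgt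
    rw [hsin] at this; linarith

set_option maxHeartbeats 2000000 in
lemma lemA (u1 u2 z1 z2 v1 v2 p1 p2 : ℝ)
    (hu : u1^2+u2^2 = 1) (hz : z1^2+z2^2 = 1) (hv : v1^2+v2^2 = 1)
    (hu1 : 0 ≤ u1) (hz1 : 0 ≤ z1) (hv1 : 0 ≤ v1) (hp1 : 0 ≤ p1)
    (d1 : 0 ≤ u1*v2 - u2*v1) (d2 : 0 ≤ v1*z2 - v2*z1)
    (hnu : ¬(v1 = -u1 ∧ v2 = -u2)) (hnz : ¬(v1 = -z1 ∧ v2 = -z2)) :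
    min (p1*u1+p2*u2) (p1*z1+p2*z2) ≤ p1*v1+p2*v2 := by
  rcases eq_or_lt_of_le (by positivity : (0:ℝ) ≤ p1^2+p2^2) with h0 | hr
  · have h1 : p1 = 0 := by nlinarith
    have h2 : p2 = 0 := by nlinarith
    simp [h1, h2]
  set r := Real.sqrt (p1^2+p2^2) with hrdef
  have hrpos : 0 < r := Real.sqrt_pos.mpr hr
  have hrsq : r^2 = p1^2+p2^2 := Real.sq_sqrt hr.le
  set φ := Real.arcsin (p2/r) with hφdef
  have hp2b : -1 ≤ p2/r ∧ p2/r ≤ 1 := by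
    constructor
    · rw [neg_le, ← neg_div, div_le_one hrpos]; nlinarith
    · rw [div_le_one hrpos]; nlinarith
  have hsinφ : Real.sin φ = p2/r := Real.sin_arcsin hp2b.1 hp2b.2
  have hcosφ : Real.cos φ = p1/r := by
    rw [hφdef, Real.cos_arcsin]
    have : 1 - (p2/r)^2 = (p1/r)^2 := by field_simp; nlinarith
    rw [this, Real.sqrt_sq (by positivity)]
  set θu := Real.arcsin u2 with hθu
  set θv := Real.arcsin v2 with hθv
  set θz := Real.arcsin z2 with hθz
  obtain ⟨hsu, hcu⟩ := mkangle u1 u2 hu hu1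
  obtain ⟨hsv, hcv⟩ := mkangle v1 v2 hv hv1
  obtain ⟨hsz, hcz⟩ := mkangle z1 z2 hz hz1
  have hinner : ∀ x1 x2 θ : ℝ, Real.sin θ = x2 → Real.cos θ = x1 →
      p1*x1 + p2*x2 = r * Real.cos (θ - φ) := by
    intro x1 x2 θ hs hc
    rw [Real.cos_sub, hs, hc, hsinφ, hcosφ]
    field_simp
  have huv : θu ≤ θv := horder u1 u2 v1 v2 hu hv hu1 hv1 d1 hnu
  have hvz2 : θv ≤ θz := by
    refine horder v1 v2 z1 z2 hv hz hv1 hz1 (by linarith) ?_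
    intro ⟨e1, e2⟩
    exact hnz ⟨by linarith, by linarith⟩
  rw [hinner u1 u2 θu hsu hcu, hinner v1 v2 θv hsv hcv, hinner z1 z2 θz hsz hcz]
  set a := θu - φ with hadef
  set x := θv - φ with hxdef
  set b := θz - φ with hbdef
  have hax : a ≤ x := by rw [hadef, hxdef]; linarith
  have hxb : x ≤ b := by rw [hxdef, hbdef]; linarith
  have hab : -π ≤ a := by
    rw [hadef, hθu, hφdef]
    linarith [Real.neg_pi_div_two_le_arcsin u2, Real.arcsin_le_pi_div_two (p2/r)]
  have hbb : b ≤ π := by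
    rw [hbdef, hθz, hφdef]
    linarith [Real.arcsin_le_pi_div_two z2, Real.neg_pi_div_two_le_arcsin (p2/r)]
  have hmaxpi : max |a| |b| ≤ π := by
    rw [max_le_iff, abs_le, abs_le]
    refine ⟨⟨hab, by linarith⟩, ⟨by linarith, hbb⟩⟩
  have habs : |x| ≤ max |a| |b| := by
    rcases le_or_gt 0 x with hx | hx
    · rw [abs_of_nonneg hx]
      calc x ≤ b := hxb
        _ ≤ |b| := le_abs_self b
        _ ≤ max |a| |b| := le_max_right _ _
    · rw [abs_of_neg hx]
      calc -x ≤ -a := by linarith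
        _ ≤ |a| := neg_le_abs a
        _ ≤ max |a| |b| := le_max_left _ _
  have hc1 : Real.cos (max |a| |b|) ≤ Real.cos x := by
    rw [← Real.cos_abs x]
    exact Real.cos_le_cos_of_nonneg_of_le_pi (abs_nonneg x) hmaxpi habs
  have hc2 : min (Real.cos a) (Real.cos b) ≤ Real.cos (max |a| |b|) := by
    rcases max_cases |a| |b| with ⟨hm, _⟩ | ⟨hm, _⟩
    · rw [hm, Real.cos_abs]; exact min_le_left _ _
    · rw [hm, Real.cos_abs]; exact min_le_right _ _
  have hfin := le_trans hc2 hc1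
  rcases min_cases (Real.cos a) (Real.cos b) with ⟨hm, _⟩ | ⟨hm, _⟩ <;> rw [hm] at hfin
  · exact le_trans (min_le_left _ _) (mul_le_mul_of_nonneg_left hfin hrpos.le)
  · exact le_trans (min_le_right _ _) (mul_le_mul_of_nonneg_left hfin hrpos.le)

/-- If `v = -u` in the cone situation, then `z = v`. -/
lemma antipodal_case (u1 u2 z1 z2 v1 v2 s t : ℝ)
    (hu : u1^2+u2^2 = 1) (hz : z1^2+z2^2 = 1)
    (hs : 0 ≤ s) (ht : 0 ≤ t)
    (hv1 : v1 = s*u1 + t*z1) (hv2 : v2 = s*u2 + t*z2)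
    (e1 : v1 = -u1) (e2 : v2 = -u2) : z1 = v1 ∧ z2 = v2 := by
  have k1 : t*z1 = -(1+s)*u1 := by linarith
  have k2 : t*z2 = -(1+s)*u2 := by linarith
  have key : (t*z1)^2 + (t*z2)^2 = (1+s)^2*(u1^2+u2^2) := by rw [k1, k2]; ring
  have hsq : t^2 = (1+s)^2 := by nlinarith [key]
  have ht' : t = 1+s := by nlinarith
  have htpos : 0 < t := by linarith
  constructor
  · have : t*z1 = t*(-u1) := by rw [k1, ht']; ring
    have := mul_left_cancel₀ (ne_of_gt htpos) this
    rw [e1]; linarith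
  · have : t*z2 = t*(-u2) := by rw [k2, ht']; ring
    have := mul_left_cancel₀ (ne_of_gt htpos) this
    rw [e2]; linarith

lemma lemA' (u1 u2 z1 z2 v1 v2 p1 p2 s t : ℝ)
    (hu : u1^2+u2^2 = 1) (hz : z1^2+z2^2 = 1) (hv : v1^2+v2^2 = 1)
    (hu1 : 0 ≤ u1) (hz1 : 0 ≤ z1) (hv1 : 0 ≤ v1) (hp1 : 0 ≤ p1)
    (hs : 0 ≤ s) (ht : 0 ≤ t)
    (hc1 : v1 = s*u1 + t*z1) (hc2 : v2 = s*u2 + t*z2) :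
    min (p1*u1+p2*u2) (p1*z1+p2*z2) ≤ p1*v1+p2*v2 := by
  by_cases hnu : v1 = -u1 ∧ v2 = -u2
  · obtain ⟨e1, e2⟩ := antipodal_case u1 u2 z1 z2 v1 v2 s t hu hz hs ht hc1 hc2 hnu.1 hnu.2
    rw [← e1, ← e2]
    exact min_le_right _ _
  by_cases hnz : v1 = -z1 ∧ v2 = -z2
  · obtain ⟨e1, e2⟩ := antipodal_case z1 z2 u1 u2 v1 v2 t s hz hu ht hs
      (by linarith) (by linarith) hnz.1 hnz.2
    rw [← e1, ← e2]
    exact min_le_left _ _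
  rcases le_or_gt 0 (u1*z2 - u2*z1) with hD | hD
  · have k1 : u1*v2 - u2*v1 = t*(u1*z2-u2*z1) := by rw [hc1, hc2]; ring
    have k2 : v1*z2 - v2*z1 = s*(u1*z2-u2*z1) := by rw [hc1, hc2]; ring
    exact lemA u1 u2 z1 z2 v1 v2 p1 p2 hu hz hv hu1 hz1 hv1 hp1
      (by rw [k1]; exact mul_nonneg ht hD) (by rw [k2]; exact mul_nonneg hs hD) hnu hnz
  · rw [min_comm]
    have k1 : z1*v2 - z2*v1 = s*(-(u1*z2-u2*z1)) := by rw [hc1, hc2]; ring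
    have k2 : v1*u2 - v2*u1 = t*(-(u1*z2-u2*z1)) := by rw [hc1, hc2]; ring
    exact lemA z1 z2 u1 u2 v1 v2 p1 p2 hz hu hv hz1 hu1 hv1 hp1
      (by rw [k1]; exact mul_nonneg hs (by linarith)) (by rw [k2]; exact mul_nonneg ht (by linarith)) hnz hnu

lemma inner3 (x y : E3) : ⟪x,y⟫ = x 0 * y 0 + x 1 * y 1 + x 2 * y 2 := by
  simp [PiLp.inner_apply, Fin.sum_univ_three, RCLike.inner_apply, conj_trivial]; ring

noncomputable def cr (a b : E3) : E3 :=
  (WithLp.equiv 2 (Fin 3 → ℝ)).symm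
    ![a 1 * b 2 - a 2 * b 1, a 2 * b 0 - a 0 * b 2, a 0 * b 1 - a 1 * b 0]

lemma cr0 (a b : E3) : cr a b 0 = a 1 * b 2 - a 2 * b 1 := by simp [cr]
lemma cr1 (a b : E3) : cr a b 1 = a 2 * b 0 - a 0 * b 2 := by simp [cr]
lemma cr2 (a b : E3) : cr a b 2 = a 0 * b 1 - a 1 * b 0 := by simp [cr]

lemma cr_orth_left (a b : E3) : ⟪cr a b, a⟫ = 0 := by
  rw [inner3, cr0, cr1, cr2]; ring

/-- Gram identity: product of two triple products equals the 3×3 "Gram" determinant. -/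
lemma gramiden (a b x y : E3) :
    ⟪cr a b, x⟫ * ⟪cr a b, y⟫ =
      ⟪a,a⟫ * (⟪b,b⟫*⟪x,y⟫ - ⟪b,x⟫*⟪b,y⟫)
      - ⟪a,b⟫ * (⟪a,b⟫*⟪x,y⟫ - ⟪b,x⟫*⟪a,y⟫)
      + ⟪a,x⟫ * (⟪a,b⟫*⟪b,y⟫ - ⟪b,b⟫*⟪a,y⟫) := by
  simp only [inner3, cr0, cr1, cr2]; ring

/-- Decomposition of inner products in the plane orthogonal to a unit vector `h`. -/
lemma plane_inner (h e x y : E3) (hh : ⟪h,h⟫ = 1) (he : ⟪e,e⟫ = 1) (hhe : ⟪h,e⟫ = 0)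
    (hx : ⟪h,x⟫ = 0) (hy : ⟪h,y⟫ = 0) :
    ⟪x,y⟫ = ⟪e,x⟫*⟪e,y⟫ + ⟪cr h e, x⟫*⟪cr h e, y⟫ := by
  have G := gramiden h e x y
  rw [hh, he, hhe, hx, hy] at G
  linarith [G]

lemma inner_self_one {x : E3} (hx : ‖x‖ = 1) : ⟪x,x⟫ = 1 := by
  rw [real_inner_self_eq_norm_mul_norm, hx]; norm_num

/-- the thickness condition yields nonpositive inner product of the centers -/
lemma thick_nonpos (g h : E3) (hg : ‖g‖ = 1) (hh : ‖h‖ = 1) (hne1 : g ≠ h)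
    (hne2 : g ≠ -h) (hΔ : lThick g h ≤ π / 2) : ⟪g,h⟫ ≤ 0 := by
  set c := ⟪g,h⟫ with hcdef
  have hlt1 : c < 1 := (inner_lt_one_iff_real_of_norm_eq_one hg hh).mpr hne1
  have hgt1 : -1 < c := by
    have h2 : ⟪g, -h⟫ < 1 := (inner_lt_one_iff_real_of_norm_eq_one hg (by rw [norm_neg]; exact hh)).mpr hne2
    rw [inner_neg_right] at h2
    linarith
  have hcomm : ⟪h,g⟫ = c := (real_inner_comm g h).trans hcdef.symm
  have e1 : ⟪g - ⟪h,g⟫ • h, g - ⟪h,g⟫ • h⟫ = 1 - c^2 := by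
    rw [hcomm]
    simp only [inner_sub_left, inner_sub_right, real_inner_smul_left, real_inner_smul_right,
      inner_self_one hg, inner_self_one hh, real_inner_comm g h, ← hcdef]
    ring
  have e2 : ⟪h - ⟪g,h⟫ • g, h - ⟪g,h⟫ • g⟫ = 1 - c^2 := by
    simp only [inner_sub_left, inner_sub_right, real_inner_smul_left, real_inner_smul_right,
      inner_self_one hg, inner_self_one hh, real_inner_comm g h, ← hcdef]
    ring
  have hpos : (0:ℝ) < 1 - c^2 := by nlinarith
  have hn1 : 0 < ‖g - ⟪h,g⟫ • h‖ := by
    rw [norm_pos_iff]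
    intro hzero
    rw [hzero, inner_zero_left] at e1
    linarith
  have hn2 : 0 < ‖h - ⟪g,h⟫ • g‖ := by
    rw [norm_pos_iff]
    intro hzero
    rw [hzero, inner_zero_left] at e2
    linarith
  have e3 : ⟪g - ⟪h,g⟫ • h, h - ⟪g,h⟫ • g⟫ = c^3 - c := by
    simp only [inner_sub_left, inner_sub_right, real_inner_smul_left, real_inner_smul_right,
      inner_self_one hg, inner_self_one hh, real_inner_comm g h, ← hcdef]
    ring
  have hip : ⟪scCenter g h, scCenter h g⟫ =
      ‖g - ⟪h,g⟫ • h‖⁻¹ * (‖h - ⟪g,h⟫ • g‖⁻¹ * (c^3 - c)) := by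
    rw [scCenter, scCenter, real_inner_smul_left, real_inner_smul_right, e3]
  have h0 : 0 ≤ ⟪scCenter g h, scCenter h g⟫ := by
    have := hΔ
    rw [lThick, sdist] at this
    exact Real.arccos_le_pi_div_two.mp this
  rw [hip] at h0
  have hinv1 : 0 < ‖g - ⟪h,g⟫ • h‖⁻¹ := by positivity
  have hinv2 : 0 < ‖h - ⟪g,h⟫ • g‖⁻¹ := by positivity
  have hc3 : 0 ≤ c^3 - c := by
    by_contra hneg
    push_neg at hneg
    have := mul_neg_of_pos_of_neg hinv1 (mul_neg_of_pos_of_neg hinv2 hneg)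
    linarith
  nlinarith

/-- Main geometric inequality on inner products. -/
lemma key_inner (g h q u v z : E3) (hg : ‖g‖ = 1) (hh : ‖h‖ = 1)
    (hc : ⟪g,h⟫ ≤ 0) (hgt1 : -1 < ⟪g,h⟫)
    (hu : u ∈ SemiIn g h) (hv : v ∈ SemiIn g h) (hz : z ∈ SemiIn g h)
    (hvz : v ∈ Arc u z) (hqn : ‖q‖ = 1) (hqg : 0 ≤ ⟪g,q⟫) (hqh : 0 ≤ ⟪h,q⟫) :
    min ⟪q,u⟫ ⟪q,z⟫ ≤ ⟪q,v⟫ := by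
  obtain ⟨hun, hhu, hgu⟩ := hu
  obtain ⟨hvn, hhv, hgv⟩ := hv
  obtain ⟨hzn, hhz, hgz⟩ := hz
  obtain ⟨-, s, t, hs, ht, hveq⟩ := hvz
  set c := ⟪g,h⟫ with hcdef
  have hh1 : ⟪h,h⟫ = 1 := inner_self_one hh
  have hg1 : ⟪g,g⟫ = 1 := inner_self_one hg
  set e := g - c • h with hedef
  have hee : ⟪e,e⟫ = 1 - c^2 := by
    simp only [hedef, inner_sub_left, inner_sub_right, real_inner_smul_left,
      real_inner_smul_right, hg1, hh1, real_inner_comm g h, ← hcdef]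
    ring
  have hpos : (0:ℝ) < 1 - c^2 := by nlinarith
  have hne : 0 < ‖e‖ := by
    rw [norm_pos_iff]
    intro hzero
    rw [hzero, inner_zero_left] at hee
    linarith
  have hne0 : e ≠ 0 := by
    intro hzero
    rw [hzero, inner_zero_left] at hee
    linarith
  set e₁ : E3 := ‖e‖⁻¹ • e with he1def
  have he1n : ‖e₁‖ = 1 := norm_smul_inv_norm hne0
  have he1 : ⟪e₁,e₁⟫ = 1 := inner_self_one he1n
  have hhe1 : ⟪h,e₁⟫ = 0 := by
    rw [he1def, real_inner_smul_right, hedef, inner_sub_right, real_inner_smul_right, hh1,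
      real_inner_comm g h, ← hcdef]
    ring
  set e₂ : E3 := cr h e₁ with he2def
  have he2h : ⟪e₂,h⟫ = 0 := cr_orth_left h e₁
  set p : E3 := q - ⟪h,q⟫ • h with hpdef
  have hhp : ⟪h,p⟫ = 0 := by
    rw [hpdef, inner_sub_right, real_inner_smul_right, hh1]
    ring
  have hunit : ∀ x : E3, ⟪h,x⟫ = 0 → ‖x‖ = 1 → ⟪e₁,x⟫^2 + ⟪e₂,x⟫^2 = 1 := by
    intro x hx hxn
    have hpi := plane_inner h e₁ x x hh1 he1 hhe1 hx hx
    rw [inner_self_one hxn] at hpi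
    rw [sq, sq]
    linarith
  have hsign : ∀ x : E3, ⟪h,x⟫ = 0 → 0 ≤ ⟪g,x⟫ → 0 ≤ ⟪e₁,x⟫ := by
    intro x hx hgx
    rw [he1def, real_inner_smul_left]
    have : ⟪e,x⟫ = ⟪g,x⟫ := by
      rw [hedef, inner_sub_left, real_inner_smul_left, hx]
      ring
    rw [this]
    positivity
  have hpu : ⟪p,u⟫ = ⟪q,u⟫ := by
    rw [hpdef, inner_sub_left, real_inner_smul_left, hhu]; ring
  have hpv : ⟪p,v⟫ = ⟪q,v⟫ := by
    rw [hpdef, inner_sub_left, real_inner_smul_left, hhv]; ring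
  have hpz : ⟪p,z⟫ = ⟪q,z⟫ := by
    rw [hpdef, inner_sub_left, real_inner_smul_left, hhz]; ring
  have hp1sign : 0 ≤ ⟪e₁,p⟫ := by
    have h2 : ⟪e₁,p⟫ = ‖e‖⁻¹ * (⟪g,q⟫ - c * ⟪h,q⟫) := by
      rw [he1def, real_inner_smul_left, hpdef, inner_sub_right, hedef, inner_sub_left,
        inner_sub_left, real_inner_smul_left, real_inner_smul_left, real_inner_smul_right,
        real_inner_smul_right, hh1, ← hcdef]
      ring
    rw [h2]
    have : 0 ≤ ⟪g,q⟫ - c * ⟪h,q⟫ := by nlinarith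
    positivity
  have hv1c : ⟪e₁,v⟫ = s*⟪e₁,u⟫ + t*⟪e₁,z⟫ := by
    rw [hveq, inner_add_right, real_inner_smul_right, real_inner_smul_right]
  have hv2c : ⟪e₂,v⟫ = s*⟪e₂,u⟫ + t*⟪e₂,z⟫ := by
    rw [hveq, inner_add_right, real_inner_smul_right, real_inner_smul_right]
  have hqu : ⟪q,u⟫ = ⟪e₁,p⟫*⟪e₁,u⟫ + ⟪e₂,p⟫*⟪e₂,u⟫ := by
    rw [← hpu]; exact plane_inner h e₁ p u hh1 he1 hhe1 hhp hhu
  have hqv : ⟪q,v⟫ = ⟪e₁,p⟫*⟪e₁,v⟫ + ⟪e₂,p⟫*⟪e₂,v⟫ := by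
    rw [← hpv]; exact plane_inner h e₁ p v hh1 he1 hhe1 hhp hhv
  have hqz : ⟪q,z⟫ = ⟪e₁,p⟫*⟪e₁,z⟫ + ⟪e₂,p⟫*⟪e₂,z⟫ := by
    rw [← hpz]; exact plane_inner h e₁ p z hh1 he1 hhe1 hhp hhz
  rw [hqu, hqv, hqz]
  exact lemA' ⟪e₁,u⟫ ⟪e₂,u⟫ ⟪e₁,z⟫ ⟪e₂,z⟫ ⟪e₁,v⟫ ⟪e₂,v⟫ ⟪e₁,p⟫ ⟪e₂,p⟫ s t
    (hunit u hhu hun) (hunit z hhz hzn) (hunit v hhv hvn)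
    (hsign u hhu hgu) (hsign z hhz hgz) (hsign v hhv hgv) hp1sign hs ht hv1c hv2c

/-- In a lune of thickness at most π/2 bounded by semicircles `Q` and `Q'`,
for `u, v, z ∈ Q` with `v` on the arc `uz` and any `q` in the lune,
`|qv| ≤ max {|qu|, |qz|}`. -/
theorem stmt0 (g h : E3) (hgh : IsLunePair g h) (hΔ : lThick g h ≤ π / 2)
    (Q : Set E3) (hQ : Q = SemiIn g h ∨ Q = SemiIn h g)
    (u v z : E3) (hu : u ∈ Q) (hv : v ∈ Q) (hz : z ∈ Q)
    (hvz : v ∈ Arc u z) (q : E3) (hq : q ∈ Lune g h) :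
    sdist q v ≤ max (sdist q u) (sdist q z) := by
  obtain ⟨hg, hh, hne1, hne2⟩ := hgh
  have hc : ⟪g,h⟫ ≤ 0 := thick_nonpos g h hg hh hne1 hne2 hΔ
  have hgt1 : -1 < ⟪g,h⟫ := by
    have h2 : ⟪g, -h⟫ < 1 :=
      (inner_lt_one_iff_real_of_norm_eq_one hg (by rw [norm_neg]; exact hh)).mpr hne2
    rw [inner_neg_right] at h2
    linarith
  obtain ⟨⟨hqn, hqg⟩, ⟨-, hqh⟩⟩ := hq
  have hmin : min ⟪q,u⟫ ⟪q,z⟫ ≤ ⟪q,v⟫ := by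
    rcases hQ with rfl | rfl
    · exact key_inner g h q u v z hg hh hc hgt1 hu hv hz hvz hqn hqg hqh
    · refine key_inner h g q u v z hh hg ?_ ?_ hu hv hz hvz hqn hqh hqg
      · rw [real_inner_comm g h]; exact hc
      · rw [real_inner_comm g h]; exact hgt1
  simp only [sdist]
  have hmono : Real.arccos ⟪q,v⟫ ≤ Real.arccos (min ⟪q,u⟫ ⟪q,z⟫) := by
    unfold Real.arccos
    exact sub_le_sub_left (Real.monotone_arcsin hmin) _
  refine hmono.trans ?_
  rcases min_cases ⟪q,u⟫ ⟪q,z⟫ with ⟨hm,-⟩|⟨hm,-⟩ <;> rw [hm]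
  · exact le_max_left _ _
  · exact le_max_right _ _
end
end

section
/- Let L ⊂ S² be a lune of thickness strictly less than π/2, and let Q be one of its bounding semicircles. For any point q ∈ L, there is a unique point p ∈ Q closest to q, and for x ∈ Q the distance |qx| is strictly increasing as a function of the distance |px|. -/
open scoped RealInnerProductSpace
open Real Set

noncomputable section

lemma arccos_lt_arccos_iff' {a b : ℝ} (ha1 : -1 ≤ a) (ha2 : a ≤ 1)
    (hb1 : -1 ≤ b) (hb2 : b ≤ 1) : arccos a < arccos b ↔ b < a :=
  Real.strictAntiOn_arccos.lt_iff_gt ⟨ha1, ha2⟩ ⟨hb1, hb2⟩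

lemma arccos_le_arccos_iff' {a b : ℝ} (ha1 : -1 ≤ a) (ha2 : a ≤ 1)
    (hb1 : -1 ≤ b) (hb2 : b ≤ 1) : arccos a ≤ arccos b ↔ b ≤ a :=
  Real.strictAntiOn_arccos.le_iff_ge ⟨ha1, ha2⟩ ⟨hb1, hb2⟩

lemma inner_neg_of_thin (g h : E3) (hgh : IsLunePair g h) (hΔ : lThick g h < π / 2) :
    ⟪g, h⟫ < 0 := by
  obtain ⟨hg, hh, hne, hne'⟩ := hgh
  set c : ℝ := ⟪h, g⟫ with hc
  have hcomm : ⟪g, h⟫ = c := by rw [hc]; exact real_inner_comm h g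
  have habs : |c| ≤ 1 := by
    have := abs_real_inner_le_norm h g; rwa [hg, hh, one_mul] at this
  have hc1 : c < 1 := by
    rcases lt_or_eq_of_le (abs_le.1 habs).2 with h1 | h1
    · exact h1
    · exact absurd (((inner_eq_one_iff_of_norm_eq_one hh hg).1 h1).symm) hne
  have hcm : -1 < c := by
    rcases lt_or_eq_of_le (abs_le.1 habs).1 with h1 | h1
    · exact h1
    · exfalso
      have h2 : ⟪h, -g⟫ = 1 := by rw [inner_neg_right]; linarith
      have h3 := (inner_eq_one_iff_of_norm_eq_one hh (by rwa [norm_neg])).1 h2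
      exact hne' (by rw [h3, neg_neg])
  have hgg : ⟪g, g⟫ = 1 := by rw [real_inner_self_eq_norm_sq, hg]; norm_num
  have hhh : ⟪h, h⟫ = 1 := by rw [real_inner_self_eq_norm_sq, hh]; norm_num
  have hu2 : ‖g - c • h‖ ^ 2 = 1 - c ^ 2 := by
    rw [norm_sub_sq_real, real_inner_smul_right, hcomm, hg, norm_smul, hh]
    rw [mul_one, Real.norm_eq_abs, sq_abs]; ring
  have hv2 : ‖h - c • g‖ ^ 2 = 1 - c ^ 2 := by
    rw [norm_sub_sq_real, real_inner_smul_right, ← hc, hh, norm_smul, hg]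
    rw [mul_one, Real.norm_eq_abs, sq_abs]; ring
  have hpos : (0:ℝ) < 1 - c ^ 2 := by nlinarith
  have hu0 : 0 < ‖g - c • h‖ := by nlinarith [norm_nonneg (g - c • h)]
  have hv0 : 0 < ‖h - c • g‖ := by nlinarith [norm_nonneg (h - c • g)]
  have hprod : ‖g - c • h‖ * ‖h - c • g‖ = 1 - c ^ 2 := by nlinarith
  have huv : ⟪g - c • h, h - c • g⟫ = -c * (1 - c ^ 2) := by
    rw [inner_sub_left, inner_sub_right, inner_sub_right, real_inner_smul_left,
      real_inner_smul_left, real_inner_smul_right, real_inner_smul_right,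
      hcomm, hgg, hhh, ← hc]
    ring
  have hval : ⟪scCenter g h, scCenter h g⟫ = -c := by
    simp only [scCenter]
    rw [← hc, hcomm, real_inner_smul_left, real_inner_smul_right, huv]
    calc ‖g - c • h‖⁻¹ * (‖h - c • g‖⁻¹ * (-c * (1 - c ^ 2)))
        = (‖g - c • h‖ * ‖h - c • g‖)⁻¹ * (-c * (1 - c ^ 2)) := by
          rw [mul_inv]; ring
      _ = -c := by rw [hprod]; field_simp
  have : (0:ℝ) < -c := by
    have h4 : lThick g h = arccos (-c) := by
      simp only [lThick, sdist, hval]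
    rw [h4] at hΔ
    exact Real.arccos_lt_pi_div_two.1 hΔ
  rw [hcomm]; linarith

set_option maxHeartbeats 1000000 in
lemma keyLemma (g h : E3) (hg : ‖g‖ = 1) (hh : ‖h‖ = 1) (hneg : ⟪g, h⟫ < 0)
    (q : E3) (hq1 : ‖q‖ = 1) (hqg : 0 ≤ ⟪g, q⟫) (hqh : 0 ≤ ⟪h, q⟫) :
    (∃! p, p ∈ SemiIn g h ∧ ∀ x ∈ SemiIn g h, sdist q p ≤ sdist q x) ∧
    ∀ p ∈ SemiIn g h, (∀ x ∈ SemiIn g h, sdist q p ≤ sdist q x) →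
      ∀ x ∈ SemiIn g h, ∀ y ∈ SemiIn g h, sdist p x < sdist p y → sdist q x < sdist q y := by
  set t : ℝ := ⟪h, q⟫ with ht
  have htle : t ≤ 1 := by
    have := abs_real_inner_le_norm h q; rw [hh, hq1, one_mul] at this
    exact (abs_le.1 this).2
  have htlt : t < 1 := by
    rcases lt_or_eq_of_le htle with h1 | h1
    · exact h1
    · exfalso
      have h2 := (inner_eq_one_iff_of_norm_eq_one hh hq1).1 h1
      rw [← h2] at hqg; linarith
  set u : E3 := q - t • h with hu
  have hhh : ⟪h, h⟫ = 1 := by rw [real_inner_self_eq_norm_sq, hh]; norm_num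
  have hu2 : ‖u‖ ^ 2 = 1 - t ^ 2 := by
    rw [hu, norm_sub_sq_real, real_inner_smul_right, ← real_inner_comm q h, ← ht,
      hq1, norm_smul, hh]
    rw [mul_one, Real.norm_eq_abs, sq_abs]; ring
  have hposs : (0:ℝ) < 1 - t ^ 2 := by nlinarith
  have hr0 : 0 < ‖u‖ := by nlinarith [norm_nonneg u]
  have hr1 : ‖u‖ ≤ 1 := by nlinarith
  set r : ℝ := ‖u‖ with hr
  set p₀ : E3 := r⁻¹ • u with hp₀def
  have hp₀ : ‖p₀‖ = 1 := by
    rw [hp₀def, norm_smul, Real.norm_eq_abs, abs_inv, abs_of_pos hr0, ← hr, inv_mul_cancel₀ hr0.ne']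
  have hhu : ⟪h, u⟫ = 0 := by
    rw [hu, inner_sub_right, real_inner_smul_right, hhh, ← ht]; ring
  have hgu : 0 ≤ ⟪g, u⟫ := by
    rw [hu, inner_sub_right, real_inner_smul_right]
    nlinarith
  have hp₀mem : p₀ ∈ SemiIn g h := by
    refine ⟨hp₀, ?_, ?_⟩
    · rw [hp₀def, real_inner_smul_right, hhu]; ring
    · rw [hp₀def, real_inner_smul_right]
      exact mul_nonneg (inv_nonneg.2 hr0.le) hgu
  have hqdecomp : q = t • h + r • p₀ := by
    rw [hp₀def, smul_inv_smul₀ hr0.ne', hu]; abel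
  have hqx : ∀ x ∈ SemiIn g h, ⟪q, x⟫ = r * ⟪p₀, x⟫ := by
    intro x hx
    rw [hqdecomp, inner_add_left, real_inner_smul_left, real_inner_smul_left, hx.2.1]
    ring
  have hCS : ∀ x ∈ SemiIn g h, -1 ≤ ⟪p₀, x⟫ ∧ ⟪p₀, x⟫ ≤ 1 := by
    intro x hx
    have := abs_real_inner_le_norm p₀ x; rw [hp₀, hx.1, one_mul] at this
    exact abs_le.1 this
  have hrb : ∀ x ∈ SemiIn g h, -1 ≤ r * ⟪p₀, x⟫ ∧ r * ⟪p₀, x⟫ ≤ 1 := by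
    intro x hx
    obtain ⟨h1, h2⟩ := hCS x hx
    constructor <;> nlinarith
  have hp₀p₀ : ⟪p₀, p₀⟫ = 1 := by rw [real_inner_self_eq_norm_sq, hp₀]; norm_num
  have hmin : ∀ x ∈ SemiIn g h, sdist q p₀ ≤ sdist q x := by
    intro x hx
    rw [sdist, sdist, hqx p₀ hp₀mem, hqx x hx, hp₀p₀, mul_one]
    rw [arccos_le_arccos_iff' (by linarith) hr1 (hrb x hx).1 (hrb x hx).2]
    nlinarith [(hCS x hx).2]
  have huniq : ∀ p, p ∈ SemiIn g h → (∀ x ∈ SemiIn g h, sdist q p ≤ sdist q x) → p = p₀ := by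
    intro p hp hmin'
    have h1 := hmin' p₀ hp₀mem
    rw [sdist, sdist, hqx p hp, hqx p₀ hp₀mem, hp₀p₀, mul_one] at h1
    have h2 := (arccos_le_arccos_iff' (hrb p hp).1 (hrb p hp).2 (by linarith) hr1).1 h1
    have h3 : (1:ℝ) ≤ ⟪p₀, p⟫ := by nlinarith
    have h4 : ⟪p₀, p⟫ = 1 := le_antisymm (hCS p hp).2 h3
    exact ((inner_eq_one_iff_of_norm_eq_one hp₀ hp.1).1 h4).symm
  constructor
  · exact ⟨p₀, ⟨hp₀mem, hmin⟩, fun p hp => huniq p hp.1 hp.2⟩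
  · intro p hp hmin' x hx y hy hlt
    have hpp := huniq p hp hmin'
    rw [hpp] at hlt
    rw [sdist, sdist] at hlt
    have h5 := (arccos_lt_arccos_iff' (hCS x hx).1 (hCS x hx).2 (hCS y hy).1 (hCS y hy).2).1 hlt
    rw [sdist, sdist, hqx x hx, hqx y hy]
    rw [arccos_lt_arccos_iff' (hrb x hx).1 (hrb x hx).2 (hrb y hy).1 (hrb y hy).2]
    nlinarith

/-- In a lune of thickness < π/2 with bounding semicircle `Q`, every `q` in the
lune has a unique closest point `p ∈ Q`, and for `x ∈ Q` the distance `|qx|`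
is strictly increasing in `|px|`. -/
theorem stmt1 (g h : E3) (hgh : IsLunePair g h) (hΔ : lThick g h < π / 2)
    (Q : Set E3) (hQ : Q = SemiIn g h ∨ Q = SemiIn h g)
    (q : E3) (hq : q ∈ Lune g h) :
    (∃! p, p ∈ Q ∧ ∀ x ∈ Q, sdist q p ≤ sdist q x) ∧
    ∀ p ∈ Q, (∀ x ∈ Q, sdist q p ≤ sdist q x) →
      ∀ x ∈ Q, ∀ y ∈ Q, sdist p x < sdist p y → sdist q x < sdist q y := by
  have hg := hgh.1
  have hh := hgh.2.1
  have hneg : ⟪g, h⟫ < 0 := inner_neg_of_thin g h hgh hΔ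
  obtain ⟨⟨hq1, hqg⟩, _, hqh⟩ := hq
  rcases hQ with rfl | rfl
  · exact keyLemma g h hg hh hneg q hq1 hqg hqh
  · exact keyLemma h g hh hg (by rwa [real_inner_comm]) q hq1 hqh hqg
end
end

section
/- For every spherically convex body C ⊂ S² with diameter at most π/2, the diameter of the set E(C) of extreme points of C equals the diameter of C: diam(E(C)) = diam(C). -/
open scoped RealInnerProductSpace
open Real Set

noncomputable section

/- ===== Auxiliary lemmas for stmt2 ===== -/

lemma aux_inner_bounds {a b : E3} (ha : ‖a‖ = 1) (hb : ‖b‖ = 1) :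
    ⟪a, b⟫ ∈ Set.Icc (-1 : ℝ) 1 := by
  have h := abs_real_inner_le_norm a b
  rw [ha, hb, one_mul] at h
  exact abs_le.1 h

lemma aux_inner_comb (v a b : E3) (s t : ℝ) :
    ⟪v, s • a + t • b⟫ = s * ⟪v, a⟫ + t * ⟪v, b⟫ := by
  rw [inner_add_right, real_inner_smul_right, real_inner_smul_right]

/-- If `sdist y z ≤ sdist y x` then `⟪y,x⟫ ≤ ⟪y,z⟫`. -/
lemma aux_inner_monot {y x z : E3} (hy : ‖y‖ = 1) (hx : ‖x‖ = 1) (hz : ‖z‖ = 1)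
    (h : sdist y z ≤ sdist y x) : ⟪y, x⟫ ≤ ⟪y, z⟫ := by
  by_contra hlt
  push_neg at hlt
  have hm := Real.strictMonoOn_arcsin (aux_inner_bounds hy hz) (aux_inner_bounds hy hx) hlt
  simp only [sdist, Real.arccos_eq_pi_div_two_sub_arcsin] at h
  linarith

/-- Unfolding non-extremality: a non-extreme point of a spherically convex set
lies on a minor arc between two other points, with coefficients summing to
more than 1. -/
lemma aux_unfold_nonextreme {C : Set E3} (hconv : SphConvex C) {e : E3} (he : e ∈ C)
    (hne : e ∉ extremePts C) :
    ∃ a ∈ C, ∃ b ∈ C, a ≠ e ∧ b ≠ e ∧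
      ∃ s t : ℝ, 0 < s ∧ 0 < t ∧ 1 < s + t ∧ e = s • a + t • b := by
  have hnc : ¬ SphConvex (C \ {e}) := fun h => hne ⟨he, h⟩
  have h1 : ∀ x ∈ C \ {e}, ‖x‖ = 1 := fun x hx => hconv.1 x hx.1
  have h2 : ∀ x ∈ C \ {e}, -x ∉ C \ {e} := fun x hx hmem => hconv.2.1 x hx.1 hmem.1
  have h3 : ¬ ∀ x ∈ C \ {e}, ∀ y ∈ C \ {e}, Arc x y ⊆ C \ {e} := by
    intro h3; exact hnc ⟨h1, h2, h3⟩
  push_neg at h3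
  obtain ⟨a, ha, b, hb, hsub⟩ := h3
  rw [Set.not_subset] at hsub
  obtain ⟨z, hz, hznot⟩ := hsub
  have hzC : z ∈ C := hconv.2.2 a ha.1 b hb.1 hz
  have hze : z = e := by
    by_contra hh; exact hznot ⟨hzC, hh⟩
  subst hze
  obtain ⟨he1, s, t, hs, ht, heq⟩ := hz
  have haC : a ∈ C := ha.1
  have hbC : b ∈ C := hb.1
  have hane : a ≠ z := ha.2
  have hbne : b ≠ z := hb.2
  have na : ‖a‖ = 1 := hconv.1 a haC
  have nb : ‖b‖ = 1 := hconv.1 b hbC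
  have hs0 : s ≠ 0 := by
    rintro rfl
    rw [zero_smul, zero_add] at heq
    have ht1 : t = 1 := by
      have h := he1
      rw [heq, norm_smul, nb, mul_one, Real.norm_eq_abs, abs_of_nonneg ht] at h
      exact h
    rw [ht1, one_smul] at heq
    exact hbne heq.symm
  have ht0 : t ≠ 0 := by
    rintro rfl
    rw [zero_smul, add_zero] at heq
    have hs1 : s = 1 := by
      have h := he1
      rw [heq, norm_smul, na, mul_one, Real.norm_eq_abs, abs_of_nonneg hs] at h
      exact h
    rw [hs1, one_smul] at heq
    exact hane heq.symm
  have hs' : 0 < s := lt_of_le_of_ne hs (Ne.symm hs0)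
  have ht' : 0 < t := lt_of_le_of_ne ht (Ne.symm ht0)
  have hab : a ≠ b := by
    rintro rfl
    rw [← add_smul] at heq
    have h1 : s + t = 1 := by
      have h := he1
      rw [heq, norm_smul, na, mul_one, Real.norm_eq_abs,
        abs_of_nonneg (by linarith : (0:ℝ) ≤ s + t)] at h
      exact h
    rw [h1, one_smul] at heq
    exact hane heq.symm
  have hablt : ⟪a, b⟫ < 1 := by
    rcases lt_or_eq_of_le (aux_inner_bounds na nb).2 with h | h
    · exact h
    · exact absurd ((inner_eq_one_iff_of_norm_eq_one na nb).1 h) hab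
  have hiaa : ⟪a, a⟫ = (1:ℝ) := by
    rw [real_inner_self_eq_norm_mul_norm, na, mul_one]
  have hibb : ⟪b, b⟫ = (1:ℝ) := by
    rw [real_inner_self_eq_norm_mul_norm, nb, mul_one]
  have hee : ⟪z, z⟫ = (1:ℝ) := by
    rw [real_inner_self_eq_norm_mul_norm, he1, mul_one]
  have hexp : s * s + t * t + 2 * (s * t * ⟪a, b⟫) = 1 := by
    have h : ⟪s • a + t • b, s • a + t • b⟫ = (1:ℝ) := by rw [← heq]; exact hee
    rw [real_inner_add_add_self] at h
    simp only [real_inner_smul_left, real_inner_smul_right, hiaa, hibb] at h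
    nlinarith [h]
  have hst : 1 < s + t := by
    nlinarith [hexp, hablt, mul_pos hs' ht', sq_nonneg (s + t)]
  exact ⟨a, haC, b, hbC, hane, hbne, s, t, hs', ht', hst, heq⟩

/-- A strict minimizer-value argument: a point of `C` minimizing a linear
functional with positive minimal value is extreme. -/
lemma aux_extreme_of_min_pos {C : Set E3} (hconv : SphConvex C) {y e : E3} (he : e ∈ C)
    (hmin : ∀ z ∈ C, ⟪y, e⟫ ≤ ⟪y, z⟫) (hpos : 0 < ⟪y, e⟫) : e ∈ extremePts C := by
  by_contra hne
  obtain ⟨a, haC, b, hbC, _, _, s, t, hs, ht, hst, heq⟩ := aux_unfold_nonextreme hconv he hne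
  have h1 : ⟪y, e⟫ = s * ⟪y, a⟫ + t * ⟪y, b⟫ := by rw [heq, aux_inner_comb]
  have ha' := hmin a haC
  have hb' := hmin b hbC
  nlinarith [mul_le_mul_of_nonneg_left ha' hs.le, mul_le_mul_of_nonneg_left hb' ht.le,
    mul_pos (by linarith : (0:ℝ) < s + t - 1) hpos]

/-- Two unit vectors orthogonal to an orthonormal pair in 3-space are equal or
opposite. -/
lemma aux_eq_or_neg {y w a x : E3} (hy : ‖y‖ = 1) (hw : ‖w‖ = 1) (hyw : ⟪y, w⟫ = 0)
    (ha : ‖a‖ = 1) (hx : ‖x‖ = 1) (hya : ⟪y, a⟫ = 0) (hwa : ⟪w, a⟫ = 0)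
    (hyx : ⟪y, x⟫ = 0) (hwx : ⟪w, x⟫ = 0) : a = x ∨ a = -x := by
  have hwy : ⟪w, y⟫ = 0 := by rw [real_inner_comm]; exact hyw
  have hxy : ⟪x, y⟫ = 0 := by rw [real_inner_comm]; exact hyx
  have hxw : ⟪x, w⟫ = 0 := by rw [real_inner_comm]; exact hwx
  have hyy : ⟪y, y⟫ = (1:ℝ) := by rw [real_inner_self_eq_norm_mul_norm, hy, mul_one]
  have hww : ⟪w, w⟫ = (1:ℝ) := by rw [real_inner_self_eq_norm_mul_norm, hw, mul_one]
  have hxx : ⟪x, x⟫ = (1:ℝ) := by rw [real_inner_self_eq_norm_mul_norm, hx, mul_one]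
  have hon : Orthonormal ℝ ![y, w, x] := by
    rw [orthonormal_iff_ite]
    intro i j
    fin_cases i <;> fin_cases j <;>
      simp [hyy, hww, hxx, hyw, hwy, hyx, hxy, hwx, hxw, hy, hw, hx]
  have hcard : Fintype.card (Fin 3) = Module.finrank ℝ E3 := by
    simp [finrank_euclideanSpace_fin]
  have hspan : ⊤ ≤ Submodule.span ℝ (Set.range ![y, w, x]) := by
    rw [hon.linearIndependent.span_eq_top_of_card_eq_finrank hcard]
  let B : OrthonormalBasis (Fin 3) ℝ E3 := OrthonormalBasis.mk hon hspan
  have hrep := B.sum_repr a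
  have hBcoe : ∀ i, B i = ![y, w, x] i := fun i => by
    simp [B, OrthonormalBasis.coe_mk]
  simp only [OrthonormalBasis.repr_apply_apply, Fin.sum_univ_three, hBcoe] at hrep
  simp only [Matrix.cons_val_zero, Matrix.cons_val_one, Matrix.head_cons,
    Matrix.cons_val_two, Matrix.tail_cons, hya, hwa, zero_smul, zero_add] at hrep
  -- hrep : ⟪x, a⟫ • x = a
  have hk : |⟪x, a⟫| = 1 := by
    have h := ha
    rw [← hrep, norm_smul, hx, mul_one, Real.norm_eq_abs] at h
    exact h
  rcases (abs_eq (by norm_num : (0:ℝ) ≤ 1)).1 hk with h | h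
  · left; rw [← hrep, h, one_smul]
  · right; rw [← hrep, h, neg_smul, one_smul]

/-- Existence of an extreme point of `C` on the great circle orthogonal to a
direction `y` along which `C` lies in the closed half-space. -/
lemma aux_exists_extreme_orth {C : Set E3} (hconv : SphConvex C) (hcomp : IsCompact C)
    (hq : ∀ a ∈ C, ∀ b ∈ C, 0 ≤ ⟪a, b⟫) {y : E3} (hy : ‖y‖ = 1)
    (hyC : ∀ z ∈ C, 0 ≤ ⟪y, z⟫) {x0 : E3} (hx0 : x0 ∈ C) (hx0y : ⟪y, x0⟫ = 0) :
    ∃ e ∈ extremePts C, ⟪y, e⟫ = 0 := by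
  have hFclosed : IsClosed {z : E3 | ⟪y, z⟫ = 0} :=
    isClosed_eq (continuous_const.inner continuous_id) continuous_const
  set F : Set E3 := C ∩ {z : E3 | ⟪y, z⟫ = 0} with hF
  have hFc : IsCompact F := hcomp.inter_right hFclosed
  have hFne : F.Nonempty := ⟨x0, hx0, hx0y⟩
  obtain ⟨x1, hx1F, hminOn⟩ := hFc.exists_isMinOn hFne
    ((continuous_const.inner continuous_id).continuousOn :
      ContinuousOn (fun z : E3 => ⟪x0, z⟫) F)
  have hmin : ∀ z ∈ F, ⟪x0, x1⟫ ≤ ⟪x0, z⟫ := fun z hz => hminOn hz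
  have hx1C : x1 ∈ C := hx1F.1
  have hx1y : ⟪y, x1⟫ = 0 := hx1F.2
  refine ⟨x1, ?_, hx1y⟩
  by_contra hne
  obtain ⟨a, haC, b, hbC, hax, hbx, s, t, hs, ht, hst, heq⟩ :=
    aux_unfold_nonextreme hconv hx1C hne
  have hsum : (0:ℝ) = s * ⟪y, a⟫ + t * ⟪y, b⟫ := by
    rw [← hx1y, heq, aux_inner_comb]
  have hya' : ⟪y, a⟫ = 0 := by nlinarith [hyC a haC, hyC b hbC, hs, ht]
  have hyb' : ⟪y, b⟫ = 0 := by nlinarith [hyC a haC, hyC b hbC, hs, ht]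
  have haF : a ∈ F := ⟨haC, hya'⟩
  have hbF : b ∈ F := ⟨hbC, hyb'⟩
  have hm0 : 0 ≤ ⟪x0, x1⟫ := hq x0 hx0 x1 hx1C
  have hma : ⟪x0, x1⟫ ≤ ⟪x0, a⟫ := hmin a haF
  have hmb : ⟪x0, x1⟫ ≤ ⟪x0, b⟫ := hmin b hbF
  have hexp : ⟪x0, x1⟫ = s * ⟪x0, a⟫ + t * ⟪x0, b⟫ := by rw [heq, aux_inner_comb]
  rcases hm0.lt_or_eq with hm | hm
  · nlinarith [mul_le_mul_of_nonneg_left hma hs.le, mul_le_mul_of_nonneg_left hmb ht.le,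
      mul_pos (by linarith : (0:ℝ) < s + t - 1) hm]
  · -- ⟪x0,x1⟫ = 0 : dimension argument
    have hx0a : ⟪x0, a⟫ = 0 := by nlinarith [hq x0 hx0 a haC, hq x0 hx0 b hbC]
    have horth := aux_eq_or_neg hy (hconv.1 x0 hx0) hx0y (hconv.1 a haC)
      (hconv.1 x1 hx1C) hya' hx0a hx1y hm.symm
    rcases horth with h | h
    · exact hax h
    · have hcontra := hq a haC x1 hx1C
      rw [h, inner_neg_left, real_inner_self_eq_norm_mul_norm, hconv.1 x1 hx1C] at hcontra
      norm_num at hcontra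

set_option maxHeartbeats 1000000 in
/-- For every spherically convex body of diameter at most π/2, the diameter of
its set of extreme points equals its diameter. -/
theorem stmt2 (C : Set E3) (hC : IsBody C) (hd : sDiam C ≤ π / 2) :
    sDiam (extremePts C) = sDiam C := by
  have hconv : SphConvex C := hC.1
  have hnorm : ∀ x ∈ C, ‖x‖ = 1 := hconv.1
  -- C is nonempty
  have hCne : C.Nonempty := by
    obtain ⟨x, hx1, ε, hε, hball⟩ := hC.2.2
    refine ⟨x, hball x hx1 ?_⟩
    have hxx : sdist x x = 0 := by
      simp only [sdist]
      rw [real_inner_self_eq_norm_mul_norm, hx1, mul_one, Real.arccos_one]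
    rw [hxx]; exact hε
  -- C is compact
  have hcomp : IsCompact C := by
    refine (isCompact_closedBall (0 : E3) 1).of_isClosed_subset hC.2.1 ?_
    intro z hz
    rw [Metric.mem_closedBall, dist_zero_right, hnorm z hz]
  -- diameter-attaining pair
  have hcont : Continuous (fun p : E3 × E3 => sdist p.1 p.2) :=
    Real.continuous_arccos.comp (continuous_fst.inner continuous_snd)
  obtain ⟨⟨x0, y0⟩, hp, hmaxOn⟩ :=
    (hcomp.prod hcomp).exists_isMaxOn (hCne.prod hCne) hcont.continuousOn
  have hx0 : x0 ∈ C := hp.1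
  have hy0 : y0 ∈ C := hp.2
  rw [isMaxOn_iff] at hmaxOn
  have hmax' : ∀ a ∈ C, ∀ b ∈ C, sdist a b ≤ sdist x0 y0 := by
    intro a ha b hb
    simpa using hmaxOn (a, b) (Set.mk_mem_prod ha hb)
  have hsdc : ∀ a b : E3, sdist a b = sdist b a := fun a b => by
    simp only [sdist]; rw [real_inner_comm]
  -- the diameter equals the attained maximum
  have hbddC : BddAbove {d | ∃ x ∈ C, ∃ y ∈ C, sdist x y = d} := by
    refine ⟨π, ?_⟩
    rintro d ⟨x, _, y, _, rfl⟩
    exact Real.arccos_le_pi _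
  have hdiam : sDiam C = sdist x0 y0 := by
    simp only [sDiam]
    apply le_antisymm
    · refine csSup_le ⟨sdist x0 y0, x0, hx0, y0, hy0, rfl⟩ ?_
      rintro d ⟨x, hx, y, hy, rfl⟩
      exact hmax' x hx y hy
    · exact le_csSup hbddC ⟨x0, hx0, y0, hy0, rfl⟩
  have hdle : sdist x0 y0 ≤ π / 2 := hdiam.symm.le.trans hd
  -- all inner products within C are nonnegative
  have hq : ∀ a ∈ C, ∀ b ∈ C, 0 ≤ ⟪a, b⟫ := by
    intro a ha b hb
    have h1 : sdist a b ≤ π / 2 := le_trans (hmax' a ha b hb) hdle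
    simp only [sdist, Real.arccos_eq_pi_div_two_sub_arcsin] at h1
    have h2 : 0 ≤ Real.arcsin ⟪a, b⟫ := by linarith
    exact Real.arcsin_nonneg.1 h2
  have hc0 : 0 ≤ ⟪y0, x0⟫ := hq y0 hy0 x0 hx0
  have hminx0 : ∀ z ∈ C, ⟪y0, x0⟫ ≤ ⟪y0, z⟫ := by
    intro z hz
    refine aux_inner_monot (hnorm y0 hy0) (hnorm x0 hx0) (hnorm z hz) ?_
    rw [hsdc y0 x0]
    exact hmax' y0 hy0 z hz
  have hminy0 : ∀ z ∈ C, ⟪x0, y0⟫ ≤ ⟪x0, z⟫ := by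
    intro z hz
    exact aux_inner_monot (hnorm x0 hx0) (hnorm y0 hy0) (hnorm z hz) (hmax' x0 hx0 z hz)
  -- find an extreme pair at distance sdist x0 y0
  have hpair : ∃ p ∈ extremePts C, ∃ q ∈ extremePts C, sdist p q = sdist x0 y0 := by
    rcases hc0.lt_or_eq with hpos | hzero
    · -- positive case: x0 and y0 are both extreme
      have he1 : x0 ∈ extremePts C := aux_extreme_of_min_pos hconv hx0 hminx0 hpos
      have hpos' : 0 < ⟪x0, y0⟫ := by rw [real_inner_comm]; exact hpos
      have he2 : y0 ∈ extremePts C := aux_extreme_of_min_pos hconv hy0 hminy0 hpos'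
      exact ⟨x0, he1, y0, he2, rfl⟩
    · -- zero case: distance is π/2
      have hzero' : ⟪y0, x0⟫ = 0 := hzero.symm
      have hy0z : ∀ z ∈ C, 0 ≤ ⟪y0, z⟫ := fun z hz => hzero.trans_le (hminx0 z hz)
      obtain ⟨e1, he1, he1y⟩ :=
        aux_exists_extreme_orth hconv hcomp hq (hnorm y0 hy0) hy0z hx0 hzero'
      have he1C : e1 ∈ C := he1.1
      have he1z : ∀ z ∈ C, 0 ≤ ⟪e1, z⟫ := fun z hz => hq e1 he1C z hz
      have hy0e1 : ⟪e1, y0⟫ = 0 := by rw [real_inner_comm]; exact he1y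
      obtain ⟨e2, he2, he2e1⟩ :=
        aux_exists_extreme_orth hconv hcomp hq (hnorm e1 he1C) he1z hy0 hy0e1
      refine ⟨e1, he1, e2, he2, ?_⟩
      have h1 : sdist e1 e2 = π / 2 := by
        simp only [sdist]
        rw [he2e1, Real.arccos_zero]
      have h2 : sdist x0 y0 = π / 2 := by
        simp only [sdist]
        rw [real_inner_comm, hzero', Real.arccos_zero]
      rw [h1, h2]
  obtain ⟨p, hpE, q, hqE, hpq⟩ := hpair
  have hbddE : BddAbove {d | ∃ x ∈ extremePts C, ∃ y ∈ extremePts C, sdist x y = d} := by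
    refine ⟨π, ?_⟩
    rintro d ⟨x, _, y, _, rfl⟩
    exact Real.arccos_le_pi _
  apply le_antisymm
  · simp only [sDiam]
    refine csSup_le ⟨sdist x0 y0, p, hpE, q, hqE, hpq⟩ ?_
    rintro d ⟨x, hx, y, hy, rfl⟩
    exact le_csSup hbddC ⟨x, hx.1, y, hy.1, rfl⟩
  · rw [hdiam]
    simp only [sDiam]
    exact le_csSup hbddE ⟨p, hpE, q, hqE, hpq⟩
end
end

section
/- Let C ⊂ S² be a spherically convex body and let d ∈ bd(C) be a boundary point that is not an extreme point of C. Then there exist extreme points e, f ∈ E(C), both different from d, such that d lies on the arc ef, and moreover the entire arc ef is contained in bd(C). -/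
open scoped RealInnerProductSpace
open Real Set

noncomputable section

/-! ### Auxiliary lemmas -/

lemma inner_le_one' {x y : E3} (hx : ‖x‖ = 1) (hy : ‖y‖ = 1) :
    |⟪x, y⟫| ≤ 1 := by
  have := abs_real_inner_le_norm x y
  rwa [hx, hy, mul_one] at this

lemma norm_sub_le_sdist {x y : E3} (hx : ‖x‖ = 1) (hy : ‖y‖ = 1) :
    ‖x - y‖ ≤ sdist x y := by
  have h1 : |⟪x, y⟫| ≤ 1 := inner_le_one' hx hy
  have h2 : ‖x - y‖ ^ 2 = 2 - 2 * ⟪x, y⟫ := by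
    rw [norm_sub_sq_real, hx, hy]; ring
  have h3 : Real.cos (sdist x y) = ⟪x, y⟫ :=
    Real.cos_arccos (by linarith [abs_le.mp h1]) (by linarith [abs_le.mp h1])
  have h4 : 1 - (sdist x y) ^ 2 / 2 ≤ ⟪x, y⟫ := by
    rw [← h3]; exact Real.one_sub_sq_div_two_le_cos
  have h5 : ‖x - y‖ ^ 2 ≤ (sdist x y) ^ 2 := by linarith
  have h6 : 0 ≤ sdist x y := Real.arccos_nonneg _
  nlinarith [norm_nonneg (x - y)]

lemma sdist_lt_of_inner_gt {x y : E3} (hx : ‖x‖ = 1) (hy : ‖y‖ = 1)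
    {ε : ℝ} (hε : 0 ≤ ε) (h : Real.cos ε < ⟪x, y⟫) : sdist x y < ε := by
  have h1 : |⟪x, y⟫| ≤ 1 := inner_le_one' hx hy
  rcases le_or_gt ε π with hεπ | hεπ
  · by_contra hcon
    push_neg at hcon
    have h2 : Real.cos (sdist x y) ≤ Real.cos ε :=
      Real.cos_le_cos_of_nonneg_of_le_pi hε (Real.arccos_le_pi _) hcon
    simp only [sdist] at h2
    rw [Real.cos_arccos (by linarith [abs_le.mp h1]) (by linarith [abs_le.mp h1])] at h2
    linarith
  · exact lt_of_le_of_lt (Real.arccos_le_pi _) hεπ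

/-- Membership of a nonnegative unit combination of two points of a convex set. -/
lemma mem_of_combo {C : Set E3} (hC : SphConvex C) {a b z : E3} (ha : a ∈ C) (hb : b ∈ C)
    {s t : ℝ} (hs : 0 ≤ s) (ht : 0 ≤ t) (hz : z = s • a + t • b) (hzn : ‖z‖ = 1) :
    z ∈ C :=
  hC.2.2 a ha b hb ⟨hzn, s, t, hs, ht, hz⟩

/-- Norm of a point on the great circle through orthonormal `d, w`. -/
lemma norm_circ {d w : E3} (hd : ‖d‖ = 1) (hw : ‖w‖ = 1) (hdw : ⟪d, w⟫ = 0) (θ : ℝ) :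
    ‖Real.cos θ • d + Real.sin θ • w‖ = 1 := by
  have h : ‖Real.cos θ • d + Real.sin θ • w‖ ^ 2 = 1 := by
    rw [norm_add_sq_real]
    rw [norm_smul, norm_smul, real_inner_smul_left, real_inner_smul_right, hdw]
    simp only [hd, hw, Real.norm_eq_abs, mul_one]
    nlinarith [Real.sin_sq_add_cos_sq θ, sq_abs (Real.cos θ), sq_abs (Real.sin θ)]
  nlinarith [norm_nonneg (Real.cos θ • d + Real.sin θ • w)]

/-- If `z` is interior, `w ∈ C`, and `p` is on the arc from `z` to `w` with
positive weight on `z`, then `p` is interior. -/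
lemma seg_interior {C : Set E3} (hC : SphConvex C) {z w p : E3}
    (hz : z ∈ sphInterior C) (hw : w ∈ C) {a b : ℝ} (ha : 0 < a) (hb : 0 ≤ b)
    (hp : p = a • z + b • w) (hpn : ‖p‖ = 1) : p ∈ sphInterior C := by
  obtain ⟨hzn, ε, hε, hball⟩ := hz
  have hwn : ‖w‖ = 1 := hC.1 w hw
  set ε' : ℝ := min ε (π / 2) with hε'def
  have hε'pos : 0 < ε' := lt_min hε (by positivity)
  have hε'le : ε' ≤ ε := min_le_left _ _
  have hε'pi : ε' ≤ π / 2 := min_le_right _ _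
  have hcos_nonneg : 0 ≤ Real.cos ε' :=
    Real.cos_nonneg_of_mem_Icc ⟨by linarith [Real.pi_pos], hε'pi⟩
  have hcos_lt : Real.cos ε' < 1 := by
    have := Real.cos_lt_cos_of_nonneg_of_le_pi (le_refl 0)
      (by linarith [Real.pi_pos]) hε'pos
    simpa using this
  -- the function giving inner product with normalized (q - b • w)
  set G : E3 → ℝ := fun q => ⟪z, ‖q - b • w‖⁻¹ • (q - b • w)⟫ with hGdef
  have hpbw : p - b • w = a • z := by rw [hp]; abel
  have hnorm_p : ‖p - b • w‖ = a := by
    rw [hpbw, norm_smul, hzn, Real.norm_eq_abs, abs_of_pos ha, mul_one]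
  have hGp : G p = 1 := by
    simp only [hGdef, hpbw, norm_smul, hzn, Real.norm_eq_abs, abs_of_pos ha, mul_one]
    rw [smul_smul, inv_mul_cancel₀ ha.ne', one_smul, real_inner_self_eq_norm_sq, hzn]
    norm_num
  have hGcont : ContinuousAt G p := by
    apply ContinuousAt.inner continuousAt_const
    refine ContinuousAt.smul (f := fun t : E3 => ‖t - b • w‖⁻¹) (g := fun t : E3 => t - b • w) ?_ ?_
    · apply ContinuousAt.inv₀
      · exact ((continuous_id.sub continuous_const).norm).continuousAt
      · rw [hnorm_p]; exact ha.ne'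
    · exact (continuous_id.sub continuous_const).continuousAt
  have hev : ∀ᶠ q in nhds p, Real.cos ε' < G q := by
    have : Set.Ioi (Real.cos ε') ∈ nhds (G p) := by
      rw [hGp] at *
      exact Ioi_mem_nhds hcos_lt
    exact hGcont.eventually_mem this
  rw [Metric.eventually_nhds_iff] at hev
  obtain ⟨δ, hδ, hδball⟩ := hev
  refine ⟨hpn, δ, hδ, fun y hy hsd => ?_⟩
  have hdist : dist y p < δ := by
    rw [dist_eq_norm]
    calc ‖y - p‖ = ‖p - y‖ := by rw [norm_sub_rev]
    _ ≤ sdist p y := norm_sub_le_sdist hpn hy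
    _ < δ := hsd
  have hGy : Real.cos ε' < G y := hδball hdist
  have hny : y - b • w ≠ 0 := by
    intro hzero
    rw [hGdef] at hGy
    simp only [hzero, norm_zero, smul_zero, inner_zero_right] at hGy
    linarith
  have hnormy : 0 < ‖y - b • w‖ := norm_pos_iff.mpr hny
  set z' : E3 := ‖y - b • w‖⁻¹ • (y - b • w) with hz'def
  have hz'n : ‖z'‖ = 1 := by
    rw [hz'def, norm_smul, Real.norm_eq_abs, abs_of_pos (inv_pos.mpr hnormy),
      inv_mul_cancel₀ hnormy.ne']
  have hz'C : z' ∈ C := by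
    apply hball z' hz'n
    have : Real.cos ε' < ⟪z, z'⟫ := hGy
    have h2 : sdist z z' < ε' := sdist_lt_of_inner_gt hzn hz'n hε'pos.le this
    linarith
  exact mem_of_combo hC hz'C hw (le_of_lt hnormy) hb
    (by rw [hz'def, smul_smul, mul_inv_cancel₀ hnormy.ne', one_smul]; abel) hy

/-- A unit vector which is a strictly positive combination of three linearly
independent elements of a convex set is interior. -/
lemma cone_interior {C : Set E3} (hC : SphConvex C) {u v t m : E3}
    (hu : u ∈ C) (hv : v ∈ C) (ht : t ∈ C)
    (hli : LinearIndependent ℝ ![u, v, t]) {α β γ : ℝ}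
    (hα : 0 < α) (hβ : 0 < β) (hγ : 0 < γ)
    (hm : m = α • u + β • v + γ • t) (hmn : ‖m‖ = 1) : m ∈ sphInterior C := by
  have hcard : Fintype.card (Fin 3) = Module.finrank ℝ E3 := by
    simp [finrank_euclideanSpace]
  set B := basisOfLinearIndependentOfCardEqFinrank hli hcard with hBdef
  have hB : ∀ i, B i = ![u, v, t] i := fun i => by
    rw [hBdef, coe_basisOfLinearIndependentOfCardEqFinrank]
  have hB0 : B 0 = u := hB 0
  have hB1 : B 1 = v := hB 1
  have hB2 : B 2 = t := hB 2
  have hrepr : B.repr m = α • Finsupp.single 0 1 + β • Finsupp.single 1 1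
      + γ • Finsupp.single 2 1 := by
    rw [hm, ← hB0, ← hB1, ← hB2]
    simp [map_add, map_smul, Module.Basis.repr_self]
  have hr0 : 0 < B.repr m 0 := by
    rw [hrepr]; simp [Finsupp.single_apply]; positivity
  have hr1 : 0 < B.repr m 1 := by
    rw [hrepr]; simp [Finsupp.single_apply]; positivity
  have hr2 : 0 < B.repr m 2 := by
    rw [hrepr]; simp [Finsupp.single_apply]; positivity
  have hcont : ∀ i : Fin 3, Continuous fun q : E3 => B.repr q i := fun i => by
    have := LinearMap.continuous_of_finiteDimensional (B.coord i)
    exact this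
  have hev : ∀ᶠ q in nhds m,
      0 < B.repr q 0 ∧ 0 < B.repr q 1 ∧ 0 < B.repr q 2 := by
    have e0 := (hcont 0).continuousAt.eventually_mem (Ioi_mem_nhds hr0)
    have e1 := (hcont 1).continuousAt.eventually_mem (Ioi_mem_nhds hr1)
    have e2 := (hcont 2).continuousAt.eventually_mem (Ioi_mem_nhds hr2)
    filter_upwards [e0, e1, e2] with q h0 h1 h2
    exact ⟨h0, h1, h2⟩
  rw [Metric.eventually_nhds_iff] at hev
  obtain ⟨δ, hδ, hδball⟩ := hev
  refine ⟨hmn, δ, hδ, fun y hy hsd => ?_⟩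
  have hdist : dist y m < δ := by
    rw [dist_eq_norm]
    calc ‖y - m‖ = ‖m - y‖ := by rw [norm_sub_rev]
    _ ≤ sdist m y := norm_sub_le_sdist hmn hy
    _ < δ := hsd
  obtain ⟨hy0, hy1, hy2⟩ := hδball hdist
  have hysum : B.repr y 0 • u + B.repr y 1 • v + B.repr y 2 • t = y := by
    have := B.sum_repr y
    rw [Fin.sum_univ_three, hB0, hB1, hB2] at this
    exact this
  set r0 := B.repr y 0
  set r1 := B.repr y 1
  set r2 := B.repr y 2
  set n : E3 := r1 • v + r2 • t with hndef
  have hn : n ≠ 0 := by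
    intro h0
    have : (0:ℝ) • u + r1 • v + r2 • t = 0 := by
      rw [zero_smul, zero_add, ← hndef, h0]
    have hall := Fintype.linearIndependent_iff.mp hli ![0, r1, r2] (by
      rw [Fin.sum_univ_three]
      simpa using this)
    have := hall 1
    simp at this
    exact hy1.ne' this
  have hnpos : 0 < ‖n‖ := norm_pos_iff.mpr hn
  have hn'C : ‖n‖⁻¹ • n ∈ C := by
    apply mem_of_combo hC hv ht (s := ‖n‖⁻¹ * r1) (t := ‖n‖⁻¹ * r2)
      (by positivity) (by positivity)
    · rw [hndef, smul_add, smul_smul, smul_smul]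
    · rw [norm_smul, Real.norm_eq_abs, abs_of_pos (inv_pos.mpr hnpos),
        inv_mul_cancel₀ hnpos.ne']
  apply mem_of_combo hC hu hn'C (s := r0) (t := ‖n‖) hy0.le hnpos.le _ hy
  rw [smul_smul, mul_inv_cancel₀ hnpos.ne', one_smul, ← hysum, hndef]
  abel
-- appended to work.lean later

lemma inner_d_circ {d w : E3} (hd : ‖d‖ = 1) (hdw : ⟪d, w⟫ = 0) (θ : ℝ) :
    ⟪d, Real.cos θ • d + Real.sin θ • w⟫ = Real.cos θ := by
  rw [inner_add_right, real_inner_smul_right, real_inner_smul_right,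
    real_inner_self_eq_norm_sq, hd, hdw]
  ring

lemma inner_w_circ {d w : E3} (hw : ‖w‖ = 1) (hdw : ⟪d, w⟫ = 0) (θ : ℝ) :
    ⟪w, Real.cos θ • d + Real.sin θ • w⟫ = Real.sin θ := by
  rw [inner_add_right, real_inner_smul_right, real_inner_smul_right,
    real_inner_self_eq_norm_sq, hw, real_inner_comm d w, hdw]
  ring

lemma endpoint_extreme {C : Set E3} (hC : IsBody C) {d w : E3}
    (hdC : d ∈ C) (hw : ‖w‖ = 1) (hdw : ⟪d, w⟫ = 0)
    {θm θp : ℝ} (hθm : 0 < θm) (hθp : 0 < θp) (hsum : θm + θp < π)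
    (Hchar : ∀ x' ∈ C, x' ∈ Submodule.span ℝ ({d, w} : Set E3) →
      ∃ θ ∈ Icc (-θm) θp, x' = Real.cos θ • d + Real.sin θ • w)
    (Hbd : ∀ θ ∈ Icc (-θm) θp,
      (Real.cos θ • d + Real.sin θ • w) ∈ C ∧
        (Real.cos θ • d + Real.sin θ • w) ∉ sphInterior C) :
    (Real.cos θp • d + Real.sin θp • w) ∈ extremePts C := by
  obtain ⟨hconv, hclosed, hint⟩ := hC
  have hd : ‖d‖ = 1 := hconv.1 d hdC
  set f : E3 := Real.cos θp • d + Real.sin θp • w with hfdef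
  have hmem : f ∈ C ∧ f ∉ sphInterior C :=
    Hbd θp ⟨by linarith, le_refl _⟩
  refine ⟨hmem.1, fun x hx => hconv.1 x hx.1, fun x hx hnx => hconv.2.1 x hx.1 hnx.1,
    fun u hu v hv q hq => ?_⟩
  refine ⟨hconv.2.2 u hu.1 v hv.1 hq, ?_⟩
  -- q ≠ f
  intro hqf
  rw [Set.mem_singleton_iff] at hqf
  subst hqf
  obtain ⟨hqn, a, b, ha, hb, hqab⟩ := hq
  have hun : ‖u‖ = 1 := hconv.1 u hu.1
  have hvn : ‖v‖ = 1 := hconv.1 v hv.1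
  have huf : u ≠ f := fun h => hu.2 (by simp [h])
  have hvf : v ≠ f := fun h => hv.2 (by simp [h])
  -- strict positivity of a, b
  have ha' : 0 < a := by
    rcases ha.lt_or_eq with h | h
    · exact h
    · exfalso
      rw [← h, zero_smul, zero_add] at hqab
      have : b = 1 := by
        have := hqn
        rw [hqab, norm_smul, hvn, Real.norm_eq_abs, mul_one, abs_of_nonneg hb] at this
        exact this
      rw [this, one_smul] at hqab
      exact hvf hqab.symm
  have hb' : 0 < b := by
    rcases hb.lt_or_eq with h | h
    · exact h
    · exfalso
      rw [← h, zero_smul, add_zero] at hqab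
      have : a = 1 := by
        have := hqn
        rw [hqab, norm_smul, hun, Real.norm_eq_abs, mul_one, abs_of_nonneg ha] at this
        exact this
      rw [this, one_smul] at hqab
      exact huf hqab.symm
  -- u, v linearly independent
  have hpair : LinearIndependent ℝ ![u, v] := by
    rw [linearIndependent_fin2]
    constructor
    · simpa using fun h => by simp [h] at hvn
    · intro c hc
      simp only [Matrix.cons_val_one, Matrix.head_cons, Matrix.cons_val_zero] at hc
      have habs : |c| = 1 := by
        have := hun
        rw [← hc, norm_smul, hvn, mul_one, Real.norm_eq_abs] at this
        exact this
      rcases abs_eq (by norm_num : (0:ℝ) ≤ 1) |>.mp habs with h1 | h1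
      · rw [h1, one_smul] at hc
        rw [← hc] at hqab
        have hab1 : a + b = 1 := by
          have := hqn
          rw [hqab, ← add_smul, norm_smul, hvn, mul_one, Real.norm_eq_abs,
            abs_of_nonneg (by linarith)] at this
          exact this
        rw [← add_smul, hab1, one_smul] at hqab
        exact hvf hqab.symm
      · rw [h1, neg_one_smul] at hc
        apply hconv.2.1 v hv.1
        rw [hc]
        exact hu.1
  by_cases htriple : LinearIndependent ℝ ![d, u, v]
  · -- case B : the triangle d u v is nondegenerate; the midpoint of the arc
    -- from d to f is interior, contradiction with Hbd
    set sh := Real.sin (θp / 2) with hshdef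
    set ch := Real.cos (θp / 2) with hchdef
    set sp := Real.sin θp with hspdef
    have hsh : 0 < sh := Real.sin_pos_of_pos_of_lt_pi (by linarith) (by linarith [Real.pi_pos])
    have hch : 0 < ch := Real.cos_pos_of_mem_Ioo ⟨by linarith [Real.pi_pos], by linarith⟩
    have hsp : 0 < sp := Real.sin_pos_of_pos_of_lt_pi hθp (by linarith)
    have hsp2 : sp = 2 * sh * ch := by
      rw [hspdef, show θp = 2 * (θp / 2) by ring, Real.sin_two_mul]
    have hcp2 : Real.cos θp = 2 * ch ^ 2 - 1 := by
      rw [show θp = 2 * (θp / 2) by ring, Real.cos_two_mul]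
    set m : E3 := ch • d + sh • w with hmdef
    have h1 : sh / sp * Real.sin θp = sh := by
      field_simp
      exact hspdef.symm
    have h2 : sh / sp * Real.cos θp + sh / sp = ch := by
      rw [div_mul_eq_mul_div, ← add_div, div_eq_iff hsp.ne', hcp2, hsp2]
      ring
    have hm1 : m = (sh / sp) • f + (sh / sp) • d := by
      have : (sh / sp) • f + (sh / sp) • d
          = (sh / sp * Real.cos θp + sh / sp) • d + (sh / sp * Real.sin θp) • w := by
        rw [hfdef]; module
      rw [this, h1, h2, hmdef]
    have hm2 : m = (sh / sp) • d + ((sh / sp) * a) • u + ((sh / sp) * b) • v := by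
      rw [hm1, hqab]; module
    have hmint : m ∈ sphInterior C :=
      cone_interior hconv hdC hu.1 hv.1 htriple
        (by positivity) (by positivity) (by positivity) hm2
        (norm_circ hd hw hdw (θp / 2))
    exact (Hbd (θp / 2) ⟨by linarith, by linarith⟩).2 hmint
  · -- case A : d ∈ span {u, v}; everything is on the circle and f is an
    -- endpoint of the arc C ∩ circle
    have hdspan : d ∈ Submodule.span ℝ ({u, v} : Set E3) := by
      have hcons : ¬ LinearIndependent ℝ (Fin.cons d ![u, v]) := by
        intro h
        apply htriple
        have : ![d, u, v] = Fin.cons d ![u, v] := by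
          ext i
          fin_cases i <;> rfl
        rw [this]
        exact h
      rw [linearIndependent_fin_cons] at hcons
      push_neg at hcons
      have hrange : Set.range ![u, v] = {u, v} := by
        simp [Matrix.range_cons, Matrix.range_empty]
        exact Set.pair_comm _ _
      have := hcons hpair
      rwa [hrange] at this
    have hsp : (0:ℝ) < Real.sin θp := Real.sin_pos_of_pos_of_lt_pi hθp (by linarith)
    -- span {d, w} = span {u, v}
    have hfspan : f ∈ Submodule.span ℝ ({u, v} : Set E3) :=
      Submodule.mem_span_pair.mpr ⟨a, b, hqab.symm⟩
    have hwspan : w ∈ Submodule.span ℝ ({u, v} : Set E3) := by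
      have hweq : w = (Real.sin θp)⁻¹ • f - ((Real.sin θp)⁻¹ * Real.cos θp) • d := by
        have h3 : (Real.sin θp)⁻¹ • f - ((Real.sin θp)⁻¹ * Real.cos θp) • d
            = ((Real.sin θp)⁻¹ * Real.sin θp) • w := by
          rw [hfdef]; module
        rw [h3, inv_mul_cancel₀ hsp.ne', one_smul]
      rw [hweq]
      exact Submodule.sub_mem _ (Submodule.smul_mem _ _ hfspan)
        (Submodule.smul_mem _ _ hdspan)
    have hle : Submodule.span ℝ ({d, w} : Set E3) ≤ Submodule.span ℝ ({u, v} : Set E3) := by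
      rw [Submodule.span_le]
      rintro x (rfl | hx)
      · exact hdspan
      · rw [Set.mem_singleton_iff] at hx
        rw [hx]
        exact hwspan
    have hdwpair : LinearIndependent ℝ ![d, w] := by
      rw [linearIndependent_fin2]
      constructor
      · simpa using fun h => by simp [h] at hw
      · intro c hc
        simp only [Matrix.cons_val_one, Matrix.head_cons, Matrix.cons_val_zero] at hc
        have h1 : ⟪d, d⟫ = (1:ℝ) := by
          rw [real_inner_self_eq_norm_sq, hd]; norm_num
        have h3 : ⟪d, d⟫ = (0:ℝ) := by
          nth_rewrite 2 [← hc]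
          rw [real_inner_smul_right, hdw, mul_zero]
        rw [h3] at h1
        norm_num at h1
    have hrangeuv : Set.range ![u, v] = {u, v} := by
      simp [Matrix.range_cons, Matrix.range_empty]
      exact Set.pair_comm _ _
    have hrangedw : Set.range ![d, w] = {d, w} := by
      simp [Matrix.range_cons, Matrix.range_empty]
      exact Set.pair_comm _ _
    have hfr1 : Module.finrank ℝ (Submodule.span ℝ ({d, w} : Set E3)) = 2 := by
      rw [← hrangedw, finrank_span_eq_card hdwpair]
      simp
    have hfr2 : Module.finrank ℝ (Submodule.span ℝ ({u, v} : Set E3)) = 2 := by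
      rw [← hrangeuv, finrank_span_eq_card hpair]
      simp
    have hspaneq : Submodule.span ℝ ({d, w} : Set E3)
        = Submodule.span ℝ ({u, v} : Set E3) :=
      Submodule.eq_of_le_of_finrank_le hle (by rw [hfr1, hfr2])
    have huspan : u ∈ Submodule.span ℝ ({d, w} : Set E3) := by
      rw [hspaneq]
      exact Submodule.subset_span (Set.mem_insert _ _)
    have hvspan : v ∈ Submodule.span ℝ ({d, w} : Set E3) := by
      rw [hspaneq]
      exact Submodule.subset_span (Set.mem_insert_of_mem _ rfl)
    obtain ⟨θu, hθu, hueq⟩ := Hchar u hu.1 huspan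
    obtain ⟨θv, hθv, hveq⟩ := Hchar v hv.1 hvspan
    have hdu : ⟪d, u⟫ = Real.cos θu := by rw [hueq]; exact inner_d_circ hd hdw θu
    have hdv : ⟪d, v⟫ = Real.cos θv := by rw [hveq]; exact inner_d_circ hd hdw θv
    have hwu : ⟪w, u⟫ = Real.sin θu := by rw [hueq]; exact inner_w_circ hw hdw θu
    have hwv : ⟪w, v⟫ = Real.sin θv := by rw [hveq]; exact inner_w_circ hw hdw θv
    have hdf : ⟪d, f⟫ = Real.cos θp := by rw [hfdef]; exact inner_d_circ hd hdw θp
    have hwf : ⟪w, f⟫ = Real.sin θp := by rw [hfdef]; exact inner_w_circ hw hdw θp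
    have hceq : Real.cos θp = a * Real.cos θu + b * Real.cos θv := by
      have h4 : ⟪d, f⟫ = a * ⟪d, u⟫ + b * ⟪d, v⟫ := by
        rw [hqab, inner_add_right, real_inner_smul_right, real_inner_smul_right]
      rw [hdf, hdu, hdv] at h4
      exact h4
    have hseq : Real.sin θp = a * Real.sin θu + b * Real.sin θv := by
      have h4 : ⟪w, f⟫ = a * ⟪w, u⟫ + b * ⟪w, v⟫ := by
        rw [hqab, inner_add_right, real_inner_smul_right, real_inner_smul_right]
      rw [hwf, hwu, hwv] at h4
      exact h4
    have hsu : Real.sin (θu - θp) ≤ 0 := by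
      have h5 : 0 ≤ Real.sin (θp - θu) :=
        Real.sin_nonneg_of_nonneg_of_le_pi (by linarith [hθu.2]) (by linarith [hθu.1])
      rw [show θu - θp = -(θp - θu) by ring, Real.sin_neg]
      linarith
    have hsv : Real.sin (θv - θp) ≤ 0 := by
      have h5 : 0 ≤ Real.sin (θp - θv) :=
        Real.sin_nonneg_of_nonneg_of_le_pi (by linarith [hθv.2]) (by linarith [hθv.1])
      rw [show θv - θp = -(θp - θv) by ring, Real.sin_neg]
      linarith
    have hzero : a * Real.sin (θu - θp) + b * Real.sin (θv - θp) = 0 := by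
      rw [Real.sin_sub, Real.sin_sub]
      linear_combination (-Real.cos θp) * hseq + Real.sin θp * hceq
    have hsu0 : Real.sin (θu - θp) = 0 := by
      by_contra h
      have h7 : Real.sin (θu - θp) < 0 := lt_of_le_of_ne hsu h
      have h8 : a * Real.sin (θu - θp) < 0 := mul_neg_of_pos_of_neg ha' h7
      have h9 : 0 ≤ b * -Real.sin (θv - θp) := mul_nonneg hb'.le (neg_nonneg.mpr hsv)
      have h10 : b * -Real.sin (θv - θp) = -(b * Real.sin (θv - θp)) := by ring
      linarith
    have hb1 : -π < θu - θp := by linarith [hθu.1]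
    have hb2 : θu - θp < π := by linarith [hθu.2, Real.pi_pos]
    have h6 := (Real.sin_eq_zero_iff_of_lt_of_lt hb1 hb2).mp hsu0
    have hθup : θu = θp := by linarith
    apply huf
    rw [hueq, hθup, hfdef]

/-- Points of the arc from `d` to `z B` are in `C`. -/
lemma arc_param_mem {C : Set E3} (hconv : SphConvex C) {d w : E3}
    (hdC : d ∈ C) (hd : ‖d‖ = 1) (hw : ‖w‖ = 1) (hdw : ⟪d, w⟫ = 0)
    {B θ : ℝ} (hB : B < π) (hBC : Real.cos B • d + Real.sin B • w ∈ C)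
    (h0 : 0 ≤ θ) (hθB : θ ≤ B) :
    Real.cos θ • d + Real.sin θ • w ∈ C := by
  rcases eq_or_lt_of_le (h0.trans hθB) with hB0 | hB0
  · have hθ0 : θ = 0 := le_antisymm (hθB.trans hB0.symm.le) h0
    rw [hθ0]
    simpa using hdC
  · have hsB : 0 < Real.sin B := Real.sin_pos_of_pos_of_lt_pi hB0 hB
    apply mem_of_combo hconv hdC hBC
      (s := Real.sin (B - θ) / Real.sin B) (t := Real.sin θ / Real.sin B)
      (div_nonneg (Real.sin_nonneg_of_nonneg_of_le_pi (by linarith) (by linarith)) hsB.le)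
      (div_nonneg (Real.sin_nonneg_of_nonneg_of_le_pi h0 (by linarith)) hsB.le)
      ?_ (norm_circ hd hw hdw θ)
  -- vector identity
    have hco1 : Real.sin (B - θ) / Real.sin B + Real.sin θ / Real.sin B * Real.cos B
        = Real.cos θ := by
      rw [Real.sin_sub]
      field_simp
      ring
    have hco2 : Real.sin θ / Real.sin B * Real.sin B = Real.sin θ :=
      div_mul_cancel₀ _ hsB.ne'
    have hexp : (Real.sin (B - θ) / Real.sin B) • d
          + (Real.sin θ / Real.sin B) • (Real.cos B • d + Real.sin B • w)
        = (Real.sin (B - θ) / Real.sin B + Real.sin θ / Real.sin B * Real.cos B) • d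
          + (Real.sin θ / Real.sin B * Real.sin B) • w := by
      module
    rw [hexp, hco1, hco2]

lemma norm_sq_combo {d w : E3} (hd : ‖d‖ = 1) (hw : ‖w‖ = 1) (hdw : ⟪d, w⟫ = 0)
    (A B : ℝ) : ‖A • d + B • w‖ ^ 2 = A ^ 2 + B ^ 2 := by
  rw [norm_add_sq_real, norm_smul, norm_smul, real_inner_smul_left,
    real_inner_smul_right, hdw]
  simp only [hd, hw, Real.norm_eq_abs, mul_one, mul_zero]
  rw [sq_abs, sq_abs]
  ring

set_option maxHeartbeats 1600000 in
/-- If `d` is a boundary point of a convex body `C` which is not extreme, then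
there are extreme points `e, f ≠ d` with `d` on the arc `ef`, and the whole
arc `ef` lies in the boundary of `C`. -/
theorem stmt15 (C : Set E3) (hC : IsBody C) (d : E3) (hd : d ∈ sphBd C)
    (hde : d ∉ extremePts C) :
    ∃ e ∈ extremePts C, ∃ f ∈ extremePts C, e ≠ d ∧ f ≠ d ∧
      d ∈ Arc e f ∧ Arc e f ⊆ sphBd C := by
  obtain ⟨hconv, hclosed, hint⟩ := hC
  have hdC : d ∈ C := hd.1
  have hdnint : d ∉ sphInterior C := hd.2
  have hdn : ‖d‖ = 1 := hconv.1 d hdC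
  -- Step 1: `d` lies strictly inside an arc of `C`
  have hnotconv : ¬ SphConvex (C \ {d}) := fun h => hde ⟨hdC, h⟩
  have hstep1 : ∃ x ∈ C \ {d}, ∃ y ∈ C \ {d}, d ∈ Arc x y := by
    by_contra hcon
    push_neg at hcon
    apply hnotconv
    refine ⟨fun x hx => hconv.1 x hx.1, fun x hx hnx => hconv.2.1 x hx.1 hnx.1, ?_⟩
    intro x hx y hy q hq
    refine ⟨hconv.2.2 x hx.1 y hy.1 hq, ?_⟩
    intro hqd
    rw [Set.mem_singleton_iff] at hqd
    subst hqd
    exact hcon x hx y hy hq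
  obtain ⟨x, hx, y, hy, _, s, t, hs, ht, hdeq⟩ := hstep1
  have hxC : x ∈ C := hx.1
  have hyC : y ∈ C := hy.1
  have hxd : x ≠ d := fun h => hx.2 (by simp [h])
  have hyd : y ≠ d := fun h => hy.2 (by simp [h])
  have hxn : ‖x‖ = 1 := hconv.1 x hxC
  have hyn : ‖y‖ = 1 := hconv.1 y hyC
  -- strict positivity of the coefficients
  have hs' : 0 < s := by
    rcases hs.lt_or_eq with h | h
    · exact h
    · exfalso
      rw [← h, zero_smul, zero_add] at hdeq
      have ht1 : t = 1 := by
        have := hdn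
        rw [hdeq, norm_smul, hyn, Real.norm_eq_abs, mul_one, abs_of_nonneg ht] at this
        exact this
      rw [ht1, one_smul] at hdeq
      exact hyd hdeq.symm
  have ht' : 0 < t := by
    rcases ht.lt_or_eq with h | h
    · exact h
    · exfalso
      rw [← h, zero_smul, add_zero] at hdeq
      have hs1 : s = 1 := by
        have := hdn
        rw [hdeq, norm_smul, hxn, Real.norm_eq_abs, mul_one, abs_of_nonneg hs] at this
        exact this
      rw [hs1, one_smul] at hdeq
      exact hxd hdeq.symm
  -- orthonormal frame for the great circle through x, y, d
  set c : ℝ := ⟪d, y⟫ with hcdef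
  set y' : E3 := y - c • d with hy'def
  have hy'ne : y' ≠ 0 := by
    intro h0
    have hyc : y = c • d := by
      have := h0
      rw [hy'def, sub_eq_zero] at this
      exact this
    have habs : |c| = 1 := by
      have := hyn
      rw [hyc, norm_smul, hdn, mul_one, Real.norm_eq_abs] at this
      exact this
    rcases abs_eq (by norm_num : (0:ℝ) ≤ 1) |>.mp habs with h1 | h1
    · rw [h1, one_smul] at hyc
      exact hyd hyc
    · rw [h1, neg_one_smul] at hyc
      apply hconv.2.1 y hyC
      rw [show -y = d from by rw [hyc]; simp]
      exact hdC
  set sy : ℝ := ‖y'‖ with hsydef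
  have hsy : 0 < sy := norm_pos_iff.mpr hy'ne
  set w : E3 := sy⁻¹ • y' with hwdef
  have hwn : ‖w‖ = 1 := by
    rw [hwdef, norm_smul, Real.norm_eq_abs, abs_of_pos (inv_pos.mpr hsy), ← hsydef,
      inv_mul_cancel₀ hsy.ne']
  have hdw : ⟪d, w⟫ = 0 := by
    rw [hwdef, real_inner_smul_right, hy'def, inner_sub_right, real_inner_smul_right,
      real_inner_self_eq_norm_sq, hdn, ← hcdef]
    ring
  have hyrep : y = c • d + sy • w := by
    rw [hwdef, smul_smul, mul_inv_cancel₀ hsy.ne', one_smul, hy'def]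
    abel
  have hc2 : c ^ 2 + sy ^ 2 = 1 := by
    have := hyn
    rw [hyrep] at this
    have h2 := norm_sq_combo hdn hwn hdw c sy
    rw [this] at h2
    linarith [h2.symm]
  -- representation of x
  set cx : ℝ := s⁻¹ * (1 - t * c) with hcxdef
  set sx : ℝ := -(s⁻¹ * (t * sy)) with hsxdef
  have hxrep : x = cx • d + sx • w := by
    have h1 : s • x = (1 - t * c) • d + (-(t * sy)) • w := by
      have h2 : s • x = d - t • y := by
        rw [hdeq]
        abel
      rw [h2, hyrep]
      module
    calc x = s⁻¹ • (s • x) := by rw [inv_smul_smul₀ hs'.ne']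
    _ = cx • d + sx • w := by rw [h1, hcxdef, hsxdef]; module
  have hsx : sx < 0 := by
    rw [hsxdef]
    have : 0 < s⁻¹ * (t * sy) := by positivity
    linarith
  have hcx2 : cx ^ 2 + sx ^ 2 = 1 := by
    have := hxn
    rw [hxrep] at this
    have h2 := norm_sq_combo hdn hwn hdw cx sx
    rw [this] at h2
    linarith [h2.symm]
  -- continuity of the circle parametrization
  have hcontz : Continuous fun θ : ℝ => Real.cos θ • d + Real.sin θ • w :=
    (Real.continuous_cos.smul continuous_const).add
      (Real.continuous_sin.smul continuous_const)
  -- the two maximal angles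
  set Sp : Set ℝ := {θ | θ ∈ Icc 0 π ∧ Real.cos θ • d + Real.sin θ • w ∈ C} with hSpdef
  set Sm : Set ℝ := {θ | θ ∈ Icc 0 π ∧
    Real.cos (-θ) • d + Real.sin (-θ) • w ∈ C} with hSmdef
  have hSp0 : (0:ℝ) ∈ Sp := ⟨⟨le_refl _, Real.pi_pos.le⟩, by simpa using hdC⟩
  have hSm0 : (0:ℝ) ∈ Sm := ⟨⟨le_refl _, Real.pi_pos.le⟩, by simpa using hdC⟩
  have hSpclosed : IsClosed Sp := by
    have : Sp = Icc 0 π ∩ (fun θ : ℝ => Real.cos θ • d + Real.sin θ • w) ⁻¹' C := rfl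
    rw [this]
    exact IsClosed.inter isClosed_Icc (hclosed.preimage hcontz)
  have hSmclosed : IsClosed Sm := by
    have : Sm = Icc 0 π ∩
        ((fun θ : ℝ => Real.cos θ • d + Real.sin θ • w) ∘ (fun θ : ℝ => -θ)) ⁻¹' C := rfl
    rw [this]
    exact IsClosed.inter isClosed_Icc
      ((hclosed.preimage (hcontz.comp continuous_neg)))
  have hSpbdd : BddAbove Sp := ⟨π, fun θ hθ => hθ.1.2⟩
  have hSmbdd : BddAbove Sm := ⟨π, fun θ hθ => hθ.1.2⟩
  set θp : ℝ := sSup Sp with hθpdef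
  set θm : ℝ := sSup Sm with hθmdef
  have hθpmem : θp ∈ Sp := hSpclosed.csSup_mem ⟨0, hSp0⟩ hSpbdd
  have hθmmem : θm ∈ Sm := hSmclosed.csSup_mem ⟨0, hSm0⟩ hSmbdd
  have hθppi : θp < π := by
    rcases lt_or_eq_of_le hθpmem.1.2 with h | h
    · exact h
    · exfalso
      have := hθpmem.2
      rw [h] at this
      simp only [Real.cos_pi, Real.sin_pi, zero_smul, add_zero, neg_one_smul] at this
      exact hconv.2.1 d hdC this
  have hθmpi : θm < π := by
    rcases lt_or_eq_of_le hθmmem.1.2 with h | h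
    · exact h
    · exfalso
      have := hθmmem.2
      rw [h] at this
      simp only [Real.cos_neg, Real.sin_neg, Real.cos_pi, Real.sin_pi, neg_zero,
        zero_smul, add_zero, neg_one_smul] at this
      exact hconv.2.1 d hdC this
  clear_value sx cx w sy y' c
  -- bounds c, cx ∈ (-1, 1)
  have hcb : -1 ≤ c ∧ c < 1 := by
    constructor <;> nlinarith [hc2, sq_nonneg sy, hsy]
  have hcxb : -1 ≤ cx ∧ cx < 1 := by
    constructor <;> nlinarith [hcx2, sq_nonneg sx, hsx]
  have hsy2 : Real.sqrt (1 - c ^ 2) = sy := by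
    rw [show (1 - c ^ 2 : ℝ) = sy ^ 2 by linarith, Real.sqrt_sq hsy.le]
  have hsx2 : Real.sqrt (1 - cx ^ 2) = -sx := by
    rw [show (1 - cx ^ 2 : ℝ) = (-sx) ^ 2 by nlinarith, Real.sqrt_sq (by linarith)]
  -- y realizes a positive angle
  have hyang : Real.arccos c ∈ Sp := by
    refine ⟨⟨Real.arccos_nonneg _, Real.arccos_le_pi _⟩, ?_⟩
    rw [Real.cos_arccos hcb.1 hcb.2.le, Real.sin_arccos, hsy2, ← hyrep]
    exact hyC
  have hxang : Real.arccos cx ∈ Sm := by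
    refine ⟨⟨Real.arccos_nonneg _, Real.arccos_le_pi _⟩, ?_⟩
    rw [Real.cos_neg, Real.sin_neg, Real.cos_arccos hcxb.1 hcxb.2.le, Real.sin_arccos,
      hsx2, neg_neg, ← hxrep]
    exact hxC
  have hθppos : 0 < θp :=
    lt_of_lt_of_le (Real.arccos_pos.mpr hcb.2) (le_csSup hSpbdd hyang)
  have hθmpos : 0 < θm :=
    lt_of_lt_of_le (Real.arccos_pos.mpr hcxb.2) (le_csSup hSmbdd hxang)
  -- membership of the full arc
  have hwn' : ‖-w‖ = 1 := by rw [norm_neg]; exact hwn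
  have hdw' : ⟪d, -w⟫ = (0:ℝ) := by rw [inner_neg_right, hdw, neg_zero]
  have hmem : ∀ θ ∈ Icc (-θm) θp, Real.cos θ • d + Real.sin θ • w ∈ C := by
    intro θ hθ
    rcases le_or_gt 0 θ with h0 | h0
    · exact arc_param_mem hconv hdC hdn hwn hdw hθppi hθpmem.2 h0 hθ.2
    · have h1 : Real.cos θ • d + Real.sin θ • w
          = Real.cos (-θ) • d + Real.sin (-θ) • (-w) := by
        rw [Real.cos_neg, Real.sin_neg]
        module
      rw [h1]
      have h2 : Real.cos θm • d + Real.sin θm • (-w) ∈ C := by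
        have := hθmmem.2
        rw [Real.cos_neg, Real.sin_neg] at this
        have h3 : Real.cos θm • d + (-Real.sin θm) • w
            = Real.cos θm • d + Real.sin θm • (-w) := by module
        rwa [h3] at this
      exact arc_param_mem hconv hdC hdn hwn' hdw' hθmpi h2 (by linarith)
        (by linarith [hθ.1])
  -- θm + θp < π
  have hsum : θm + θp < π := by
    by_contra h
    push_neg at h
    have h1 : π - θm ∈ Icc (-θm) θp := ⟨by linarith, by linarith⟩
    have h2 := hmem _ h1
    rw [Real.cos_pi_sub, Real.sin_pi_sub] at h2
    have h3 : (-Real.cos θm) • d + Real.sin θm • w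
        = -(Real.cos (-θm) • d + Real.sin (-θm) • w) := by
      rw [Real.cos_neg, Real.sin_neg]
      module
    rw [h3] at h2
    exact hconv.2.1 _ hθmmem.2 h2
  -- every point of the arc is in the boundary
  have Hbd : ∀ θ ∈ Icc (-θm) θp,
      (Real.cos θ • d + Real.sin θ • w) ∈ C ∧
        (Real.cos θ • d + Real.sin θ • w) ∉ sphInterior C := by
    intro θ hθ
    refine ⟨hmem θ hθ, fun hzint => ?_⟩
    rcases lt_trichotomy θ 0 with h0 | h0 | h0
    · -- use f' = z θp
      have hfC : Real.cos θp • d + Real.sin θp • w ∈ C := hθpmem.2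
      have hΔ : 0 < Real.sin (θp - θ) :=
        Real.sin_pos_of_pos_of_lt_pi (by linarith) (by linarith [hθ.1])
      have ha : 0 < Real.sin θp / Real.sin (θp - θ) :=
        div_pos (Real.sin_pos_of_pos_of_lt_pi hθppos (by linarith)) hΔ
      have hb : 0 ≤ Real.sin (-θ) / Real.sin (θp - θ) :=
        div_nonneg (Real.sin_nonneg_of_nonneg_of_le_pi (by linarith)
          (by linarith [hθ.1])) hΔ.le
      apply hdnint
      apply seg_interior hconv hzint hfC ha hb ?_ hdn
      have hco1 : Real.sin θp / Real.sin (θp - θ) * Real.cos θ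
          + Real.sin (-θ) / Real.sin (θp - θ) * Real.cos θp = 1 := by
        rw [Real.sin_neg]
        rw [div_mul_eq_mul_div, div_mul_eq_mul_div, ← add_div,
          div_eq_one_iff_eq hΔ.ne', Real.sin_sub]
        ring
      have hco2 : Real.sin θp / Real.sin (θp - θ) * Real.sin θ
          + Real.sin (-θ) / Real.sin (θp - θ) * Real.sin θp = 0 := by
        rw [Real.sin_neg]
        field_simp
        ring
      have hexp : (Real.sin θp / Real.sin (θp - θ)) • (Real.cos θ • d + Real.sin θ • w)
            + (Real.sin (-θ) / Real.sin (θp - θ)) • (Real.cos θp • d + Real.sin θp • w)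
          = (Real.sin θp / Real.sin (θp - θ) * Real.cos θ
              + Real.sin (-θ) / Real.sin (θp - θ) * Real.cos θp) • d
            + (Real.sin θp / Real.sin (θp - θ) * Real.sin θ
              + Real.sin (-θ) / Real.sin (θp - θ) * Real.sin θp) • w := by
        module
      rw [hexp, hco1, hco2, one_smul, zero_smul, add_zero]
    · rw [h0] at hzint
      simp only [Real.cos_zero, Real.sin_zero, one_smul, zero_smul, add_zero] at hzint
      exact hdnint hzint
    · -- use e' = z (-θm)
      have heC : Real.cos (-θm) • d + Real.sin (-θm) • w ∈ C := hθmmem.2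
      have hΔ : 0 < Real.sin (θ + θm) :=
        Real.sin_pos_of_pos_of_lt_pi (by linarith) (by linarith [hθ.2])
      have ha : 0 < Real.sin θm / Real.sin (θ + θm) :=
        div_pos (Real.sin_pos_of_pos_of_lt_pi hθmpos (by linarith)) hΔ
      have hb : 0 ≤ Real.sin θ / Real.sin (θ + θm) :=
        div_nonneg (Real.sin_nonneg_of_nonneg_of_le_pi h0.le
          (by linarith [hθ.2])) hΔ.le
      apply hdnint
      apply seg_interior hconv hzint heC ha hb ?_ hdn
      have hco1 : Real.sin θm / Real.sin (θ + θm) * Real.cos θ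
          + Real.sin θ / Real.sin (θ + θm) * Real.cos (-θm) = 1 := by
        rw [Real.cos_neg]
        rw [div_mul_eq_mul_div, div_mul_eq_mul_div, ← add_div,
          div_eq_one_iff_eq hΔ.ne', Real.sin_add]
        ring
      have hco2 : Real.sin θm / Real.sin (θ + θm) * Real.sin θ
          + Real.sin θ / Real.sin (θ + θm) * Real.sin (-θm) = 0 := by
        rw [Real.sin_neg]
        field_simp
        ring
      have hexp : (Real.sin θm / Real.sin (θ + θm)) • (Real.cos θ • d + Real.sin θ • w)
            + (Real.sin θ / Real.sin (θ + θm)) • (Real.cos (-θm) • d + Real.sin (-θm) • w)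
          = (Real.sin θm / Real.sin (θ + θm) * Real.cos θ
              + Real.sin θ / Real.sin (θ + θm) * Real.cos (-θm)) • d
            + (Real.sin θm / Real.sin (θ + θm) * Real.sin θ
              + Real.sin θ / Real.sin (θ + θm) * Real.sin (-θm)) • w := by
        module
      rw [hexp, hco1, hco2, one_smul, zero_smul, add_zero]
  -- characterization of points of C on the circle
  have Hchar : ∀ x' ∈ C, x' ∈ Submodule.span ℝ ({d, w} : Set E3) →
      ∃ θ ∈ Icc (-θm) θp, x' = Real.cos θ • d + Real.sin θ • w := by
    intro x' hx'C hx'span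
    obtain ⟨A, B, hAB⟩ := Submodule.mem_span_pair.mp hx'span
    have hx'n : ‖x'‖ = 1 := hconv.1 x' hx'C
    have hAB2 : A ^ 2 + B ^ 2 = 1 := by
      have := hx'n
      rw [← hAB] at this
      have h2 := norm_sq_combo hdn hwn hdw A B
      rw [this] at h2
      linarith [h2.symm]
    have hA1 : -1 ≤ A := by nlinarith [sq_nonneg B]
    have hA2 : A ≤ 1 := by nlinarith [sq_nonneg B]
    rcases le_or_gt 0 B with hB | hB
    · refine ⟨Real.arccos A, ⟨by linarith [Real.arccos_nonneg A], ?_⟩, ?_⟩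
      · apply le_csSup hSpbdd
        refine ⟨⟨Real.arccos_nonneg _, Real.arccos_le_pi _⟩, ?_⟩
        rw [Real.cos_arccos hA1 hA2, Real.sin_arccos,
          show Real.sqrt (1 - A ^ 2) = B by
            rw [show (1 - A ^ 2 : ℝ) = B ^ 2 by linarith, Real.sqrt_sq hB],
          hAB]
        exact hx'C
      · rw [Real.cos_arccos hA1 hA2, Real.sin_arccos,
          show Real.sqrt (1 - A ^ 2) = B by
            rw [show (1 - A ^ 2 : ℝ) = B ^ 2 by linarith, Real.sqrt_sq hB],
          hAB]
    · have hBs : Real.sqrt (1 - A ^ 2) = -B := by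
        rw [show (1 - A ^ 2 : ℝ) = (-B) ^ 2 by nlinarith, Real.sqrt_sq (by linarith)]
      have hrep : x' = Real.cos (-Real.arccos A) • d + Real.sin (-Real.arccos A) • w := by
        rw [Real.cos_neg, Real.sin_neg, Real.cos_arccos hA1 hA2, Real.sin_arccos, hBs,
          neg_neg, hAB]
      refine ⟨-Real.arccos A, ⟨?_, by linarith [Real.arccos_nonneg A]⟩, hrep⟩
      have : Real.arccos A ∈ Sm := by
        refine ⟨⟨Real.arccos_nonneg _, Real.arccos_le_pi _⟩, ?_⟩
        rw [← hrep]
        exact hx'C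
      have := le_csSup hSmbdd this
      linarith
  -- f is an extreme point
  have hf : (Real.cos θp • d + Real.sin θp • w) ∈ extremePts C :=
    endpoint_extreme ⟨hconv, hclosed, hint⟩ hdC hwn hdw hθmpos hθppos hsum Hchar Hbd
  -- e is an extreme point (apply the key lemma with w ↦ -w)
  have hspanneg : Submodule.span ℝ ({d, -w} : Set E3)
      = Submodule.span ℝ ({d, w} : Set E3) := by
    apply le_antisymm
    · rw [Submodule.span_le]
      rintro q (rfl | hq)
      · exact Submodule.subset_span (Set.mem_insert _ _)
      · rw [Set.mem_singleton_iff] at hq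
        rw [hq]
        exact Submodule.neg_mem _ (Submodule.subset_span (Set.mem_insert_of_mem _ rfl))
    · rw [Submodule.span_le]
      rintro q (rfl | hq)
      · exact Submodule.subset_span (Set.mem_insert _ _)
      · rw [Set.mem_singleton_iff] at hq
        rw [hq]
        exact Submodule.mem_span_pair.mpr ⟨0, -1, by module⟩
  have Hchar' : ∀ x' ∈ C, x' ∈ Submodule.span ℝ ({d, -w} : Set E3) →
      ∃ θ ∈ Icc (-θp) θm, x' = Real.cos θ • d + Real.sin θ • (-w) := by
    intro x' hx'C hx'span
    rw [hspanneg] at hx'span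
    obtain ⟨θ, hθ, hrep⟩ := Hchar x' hx'C hx'span
    refine ⟨-θ, ⟨by linarith [hθ.2], by linarith [hθ.1]⟩, ?_⟩
    rw [Real.cos_neg, Real.sin_neg, hrep]
    module
  have Hbd' : ∀ θ ∈ Icc (-θp) θm,
      (Real.cos θ • d + Real.sin θ • (-w)) ∈ C ∧
        (Real.cos θ • d + Real.sin θ • (-w)) ∉ sphInterior C := by
    intro θ hθ
    have h1 : Real.cos θ • d + Real.sin θ • (-w)
        = Real.cos (-θ) • d + Real.sin (-θ) • w := by
      rw [Real.cos_neg, Real.sin_neg]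
      module
    rw [h1]
    exact Hbd (-θ) ⟨by linarith [hθ.2], by linarith [hθ.1]⟩
  have he : (Real.cos θm • d + Real.sin θm • (-w)) ∈ extremePts C :=
    endpoint_extreme ⟨hconv, hclosed, hint⟩ hdC hwn' hdw' hθppos hθmpos
      (by linarith) Hchar' Hbd'
  -- assemble the conclusion
  set e : E3 := Real.cos θm • d + Real.sin θm • (-w) with hedef
  set f : E3 := Real.cos θp • d + Real.sin θp • w with hfdef
  have hsinm : 0 < Real.sin θm := Real.sin_pos_of_pos_of_lt_pi hθmpos hθmpi
  have hsinp : 0 < Real.sin θp := Real.sin_pos_of_pos_of_lt_pi hθppos hθppi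
  have hwd : ⟪w, d⟫ = (0:ℝ) := by rw [real_inner_comm]; exact hdw
  have hend : e ≠ d := by
    intro h
    have h1 := congrArg (fun q : E3 => ⟪w, q⟫) h
    simp only [hedef, inner_add_right, real_inner_smul_right, inner_neg_right,
      real_inner_self_eq_norm_sq, hwn, hwd] at h1
    norm_num at h1
    nlinarith [h1, hsinm]
  have hfnd : f ≠ d := by
    intro h
    have h1 := congrArg (fun q : E3 => ⟪w, q⟫) h
    simp only [hfdef, inner_add_right, real_inner_smul_right,
      real_inner_self_eq_norm_sq, hwn, hwd] at h1
    norm_num at h1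
    nlinarith [h1, hsinp]
  have hΔ : 0 < Real.sin (θm + θp) :=
    Real.sin_pos_of_pos_of_lt_pi (by linarith) hsum
  have hdArc : d ∈ Arc e f := by
    refine ⟨hdn, Real.sin θp / Real.sin (θm + θp), Real.sin θm / Real.sin (θm + θp),
      (div_pos hsinp hΔ).le, (div_pos hsinm hΔ).le, ?_⟩
    have hco1 : Real.sin θp / Real.sin (θm + θp) * Real.cos θm
        + Real.sin θm / Real.sin (θm + θp) * Real.cos θp = 1 := by
      rw [div_mul_eq_mul_div, div_mul_eq_mul_div, ← add_div,
        div_eq_one_iff_eq hΔ.ne', Real.sin_add]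
      ring
    have hco2 : Real.sin θm / Real.sin (θm + θp) * Real.sin θp
        - Real.sin θp / Real.sin (θm + θp) * Real.sin θm = 0 := by
      ring
    have hexp : (Real.sin θp / Real.sin (θm + θp)) • e
          + (Real.sin θm / Real.sin (θm + θp)) • f
        = (Real.sin θp / Real.sin (θm + θp) * Real.cos θm
            + Real.sin θm / Real.sin (θm + θp) * Real.cos θp) • d
          + (Real.sin θm / Real.sin (θm + θp) * Real.sin θp
            - Real.sin θp / Real.sin (θm + θp) * Real.sin θm) • w := by
      rw [hedef, hfdef]
      module
    rw [hexp, hco1, hco2, one_smul, zero_smul, add_zero]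
  have hArcBd : Arc e f ⊆ sphBd C := by
    rintro q ⟨hqn, aa, bb, haa, hbb, hqeq⟩
    have heC : e ∈ C := by
      have := (Hbd' θm ⟨by linarith, le_refl _⟩).1
      exact this
    have hfC : f ∈ C := hθpmem.2
    have hqC : q ∈ C := mem_of_combo hconv heC hfC haa hbb hqeq hqn
    have hespan : e ∈ Submodule.span ℝ ({d, w} : Set E3) := by
      apply Submodule.mem_span_pair.mpr
      exact ⟨Real.cos θm, -Real.sin θm, by rw [hedef]; module⟩
    have hfspan : f ∈ Submodule.span ℝ ({d, w} : Set E3) := by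
      apply Submodule.mem_span_pair.mpr
      exact ⟨Real.cos θp, Real.sin θp, by rw [hfdef]⟩
    have hqspan : q ∈ Submodule.span ℝ ({d, w} : Set E3) := by
      rw [hqeq]
      exact Submodule.add_mem _ (Submodule.smul_mem _ _ hespan)
        (Submodule.smul_mem _ _ hfspan)
    obtain ⟨θ, hθ, hqrep⟩ := Hchar q hqC hqspan
    exact ⟨hqC, by rw [hqrep]; exact (Hbd θ hθ).2⟩
  exact ⟨e, he, f, hf, hend, hfnd, hdArc, hArcBd⟩
end
end

section
/- For every spherically convex body C ⊂ S², the thickness does not exceed the diameter: Δ(C) ≤ diam(C). -/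
open scoped RealInnerProductSpace
open Real Set

noncomputable section

/-!
Take a diametral pair `p, q` of `C`: it exists by compactness, and `p ≠ q`, `p ≠ -q` because
`C` has interior points and contains no antipodal pair. Since `p` is the point of `C` farthest
from `q`, Fermat's rule applied along the arcs of `C` issuing from `p` shows that `C` lies in the
hemisphere centred at `scCenter q p`, the pole of the great circle through `p` perpendicular to
`pq` on the side of `q`; symmetrically `C` lies in the hemisphere centred at `scCenter p q`.
These two supporting hemispheres form a lune whose bounding semicircles are centred at `q` and
`p`, so `Δ(C) ≤ width ≤ sdist p q ≤ diam C`.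
-/

section InnerProductSpace

variable {V : Type*} [NormedAddCommGroup V] [InnerProductSpace ℝ V]

theorem exists_norm_eq_one_inner_eq_zero [FiniteDimensional ℝ V] (hV : 1 < Module.finrank ℝ V)
    (x : V) : ∃ u : V, ‖u‖ = 1 ∧ ⟪x, u⟫ = 0 := by
  have : Nontrivial (ℝ ∙ x)ᗮ := by
    apply Module.nontrivial_of_finrank_pos (R := ℝ)
    have := (ℝ ∙ x).finrank_add_finrank_orthogonal
    have : Module.finrank ℝ (ℝ ∙ x) ≤ 1 := by simpa using finrank_span_le_card ({x} : Set V)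
    lia
  obtain ⟨v, hv⟩ := exists_ne (0 : (ℝ ∙ x)ᗮ)
  have hv0 : (v : V) ≠ 0 := by simpa using hv
  refine ⟨‖(v : V)‖⁻¹ • (v : V), norm_smul_inv_norm hv0, ?_⟩
  rw [real_inner_smul_right, Submodule.mem_orthogonal_singleton_iff_inner_right.mp v.2, mul_zero]

theorem norm_cos_smul_add_sin_smul {x u : V} (hx : ‖x‖ = 1) (hu : ‖u‖ = 1) (hxu : ⟪x, u⟫ = 0)
    (θ : ℝ) : ‖cos θ • x + sin θ • u‖ = 1 := by
  have hperp : ⟪cos θ • x, sin θ • u⟫ = 0 := by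
    rw [real_inner_smul_left, real_inner_smul_right, hxu, mul_zero, mul_zero]
  have h := norm_add_sq_eq_norm_sq_add_norm_sq_real hperp
  simp only [norm_smul, hx, hu, Real.norm_eq_abs, mul_one] at h
  nlinarith [abs_mul_abs_self (cos θ), abs_mul_abs_self (sin θ), sin_sq_add_cos_sq θ,
    norm_nonneg (cos θ • x + sin θ • u)]

/-- First-order condition at `p` for the minimum of `w ↦ ⟪q, w⟫ - ⟪q, p⟫ ‖w‖` on `[p, x]`. -/
theorem mul_inner_le_inner_of_forall_mem_segment {p q x : V} (hp : ‖p‖ = 1)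
    (h : ∀ w ∈ segment ℝ p x, ⟪q, p⟫ * ‖w‖ ≤ ⟪q, w⟫) : ⟪q, p⟫ * ⟪p, x⟫ ≤ ⟪q, x⟫ := by
  set t := ⟪q, p⟫
  let f : V → ℝ := fun w => ⟪q, w⟫ - t * √(‖w‖ ^ 2)
  have hmin : IsMinOn f (segment ℝ p x) p := isMinOn_iff.mpr fun w hw => by
    simp only [f, sqrt_sq (norm_nonneg _), hp]
    linarith [h w hw]
  have hderiv : HasFDerivAt f (innerSL ℝ q - t • innerSL ℝ p) p := by
    have hsq := ((hasStrictFDerivAt_norm_sq p).hasFDerivAt.sqrt (by simp [hp])).const_mul t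
    refine ((innerSL ℝ q).hasFDerivAt.sub hsq).congr_fderiv ?_
    ext v
    simp [hp]
  have := hmin.localize.hasFDerivWithinAt_nonneg hderiv.hasFDerivWithinAt
    (sub_mem_posTangentConeAt_of_segment_subset subset_rfl)
  simp only [sub_apply, smul_apply, innerSL_apply_apply,
    inner_sub_right, smul_eq_mul, real_inner_self_eq_norm_sq, hp] at this
  linarith

theorem inner_sq_lt_one {x y : V} (hx : ‖x‖ = 1) (hy : ‖y‖ = 1) (hxy : x ≠ y) (hxy' : x ≠ -y) :
    ⟪x, y⟫ ^ 2 < 1 := by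
  have h1 : ⟪x, y⟫ ≠ 1 := mt (inner_eq_one_iff_of_norm_eq_one hx hy).1 hxy
  have h2 : ⟪x, y⟫ ≠ -1 := mt (inner_eq_neg_one_iff_of_norm_eq_one hx hy).1 hxy'
  obtain ⟨h3, h4⟩ := real_inner_mem_Icc_of_norm_eq_one hx hy
  nlinarith [lt_of_le_of_ne h4 h1, lt_of_le_of_ne h3 (Ne.symm h2)]

end InnerProductSpace

theorem sdist_comm (x y : E3) : sdist x y = sdist y x := by
  rw [sdist, sdist, real_inner_comm]

theorem sdist_self {x : E3} (hx : ‖x‖ = 1) : sdist x x = 0 := by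
  rw [sdist, real_inner_self_eq_norm_sq, hx, one_pow, arccos_one]

theorem sdist_pos {x y : E3} (hx : ‖x‖ = 1) (hy : ‖y‖ = 1) (hxy : x ≠ y) : 0 < sdist x y := by
  refine (arccos_nonneg _).lt_of_ne' fun h => hxy ?_
  exact (inner_eq_one_iff_of_norm_eq_one hx hy).1
    (le_antisymm (real_inner_le_one_of_norm_eq_one hx hy) (arccos_eq_zero.1 h))

theorem inner_le_inner_of_sdist_le {a b c d : E3} (ha : ‖a‖ = 1) (hb : ‖b‖ = 1) (hc : ‖c‖ = 1)
    (hd : ‖d‖ = 1) (h : sdist a b ≤ sdist c d) : ⟪c, d⟫ ≤ ⟪a, b⟫ :=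
  (strictAntiOn_arccos.le_iff_ge (real_inner_mem_Icc_of_norm_eq_one ha hb)
    (real_inner_mem_Icc_of_norm_eq_one hc hd)).1 h

theorem sdist_le_sDiam {A : Set E3} {x y : E3} (hx : x ∈ A) (hy : y ∈ A) :
    sdist x y ≤ sDiam A :=
  le_csSup ⟨π, by rintro _ ⟨x, -, y, -, rfl⟩; exact arccos_le_pi _⟩ ⟨x, hx, y, hy, rfl⟩

theorem inv_norm_smul_mem_arc {a b w : E3} (hw : w ∈ segment ℝ a b) (hw0 : w ≠ 0) :
    ‖w‖⁻¹ • w ∈ Arc a b := by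
  obtain ⟨s, t, hs, ht, -, rfl⟩ := hw
  have hn : 0 ≤ ‖s • a + t • b‖⁻¹ := inv_nonneg.2 (norm_nonneg _)
  refine ⟨norm_smul_inv_norm hw0, _, _, mul_nonneg hn hs, mul_nonneg hn ht, ?_⟩
  rw [smul_add, smul_smul, smul_smul]

/-- A point `p` of a spherically convex set farthest from `q` sees the whole set in the
hemisphere whose boundary is orthogonal to the arc `pq` at `p`. -/
theorem SphConvex.mul_inner_le_inner {C : Set E3} (hC : SphConvex C) {p q x : E3} (hp : p ∈ C)
    (hx : x ∈ C) (hfar : ∀ z ∈ C, ⟪q, p⟫ ≤ ⟪q, z⟫) : ⟪q, p⟫ * ⟪p, x⟫ ≤ ⟪q, x⟫ := by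
  refine mul_inner_le_inner_of_forall_mem_segment (hC.1 p hp) fun w hw => ?_
  rcases eq_or_ne w 0 with rfl | hw0
  · simp
  have h := hfar _ (hC.2.2 p hp x hx (inv_norm_smul_mem_arc hw hw0))
  rwa [real_inner_smul_right, ← div_eq_inv_mul, le_div_iff₀ (norm_pos_iff.2 hw0)] at h

section scCenter

variable {p q : E3}

theorem inner_scCenter (x : E3) :
    ⟪scCenter q p, x⟫ = ‖q - ⟪p, q⟫ • p‖⁻¹ * (⟪q, x⟫ - ⟪p, q⟫ * ⟪p, x⟫) := by
  rw [scCenter, real_inner_smul_left, inner_sub_left, real_inner_smul_left]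

theorem scCenter_eq_of_sub_eq {g h v : E3} (hv : ‖v‖ = 1) {s : ℝ} (hs : 0 < s)
    (hgh : g - ⟪h, g⟫ • h = s • v) : scCenter g h = v := by
  rw [scCenter, hgh, norm_smul, hv, mul_one, norm_of_nonneg hs.le, smul_smul,
    inv_mul_cancel₀ hs.ne', one_smul]

theorem norm_sub_inner_smul (hp : ‖p‖ = 1) (hq : ‖q‖ = 1) :
    ‖q - ⟪p, q⟫ • p‖ = √(1 - ⟪p, q⟫ ^ 2) := by
  rw [norm_eq_sqrt_real_inner]
  congr 1
  simp only [inner_sub_left, inner_sub_right, real_inner_smul_left, real_inner_smul_right,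
    real_inner_self_eq_norm_sq, norm_smul, norm_eq_abs, mul_pow, sq_abs, hp, hq,
    real_inner_comm q p]
  ring

theorem norm_scCenter (hp : ‖p‖ = 1) (hq : ‖q‖ = 1) (ht : ⟪p, q⟫ ^ 2 < 1) :
    ‖scCenter q p‖ = 1 := by
  have hpos : 0 < ‖q - ⟪p, q⟫ • p‖ := by
    rw [norm_sub_inner_smul hp hq]
    exact sqrt_pos.2 (by linarith)
  exact norm_smul_inv_norm (norm_pos_iff.1 hpos)

theorem inner_scCenter_scCenter (hp : ‖p‖ = 1) (hq : ‖q‖ = 1) (ht : ⟪p, q⟫ ^ 2 < 1) :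
    ⟪scCenter p q, scCenter q p⟫ = -⟪p, q⟫ := by
  have hs := norm_sub_inner_smul hp hq
  have hs' := norm_sub_inner_smul hq hp
  have hs0 : √(1 - ⟪p, q⟫ ^ 2) ≠ 0 := (sqrt_pos.2 (by linarith)).ne'
  have hsq := sq_sqrt (show 0 ≤ 1 - ⟪p, q⟫ ^ 2 by linarith)
  rw [inner_scCenter, real_inner_comm (scCenter q p) p, real_inner_comm (scCenter q p) q,
    inner_scCenter, inner_scCenter]
  simp only [real_inner_self_eq_norm_sq, hp, hq, real_inner_comm p q] at hs' ⊢
  rw [hs, hs']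
  field_simp
  linear_combination ⟪p, q⟫ * hsq

theorem scCenter_scCenter (hp : ‖p‖ = 1) (hq : ‖q‖ = 1) (ht : ⟪p, q⟫ ^ 2 < 1) :
    scCenter (scCenter q p) (scCenter p q) = q := by
  have hs := norm_sub_inner_smul hp hq
  have hs' := norm_sub_inner_smul hq hp
  have hs0 : 0 < √(1 - ⟪p, q⟫ ^ 2) := sqrt_pos.2 (by linarith)
  have hsq := sq_sqrt (show 0 ≤ 1 - ⟪p, q⟫ ^ 2 by linarith)
  refine scCenter_eq_of_sub_eq hq hs0 ?_
  rw [inner_scCenter_scCenter hp hq ht, scCenter, scCenter]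
  rw [real_inner_comm p q] at hs' ⊢
  rw [hs, hs']
  match_scalars
  · field_simp
    linear_combination -hsq
  · field_simp
    ring

theorem isLunePair_scCenter (hp : ‖p‖ = 1) (hq : ‖q‖ = 1) (ht : ⟪p, q⟫ ^ 2 < 1) :
    IsLunePair (scCenter q p) (scCenter p q) := by
  have ht' : ⟪q, p⟫ ^ 2 < 1 := by rwa [real_inner_comm]
  have hgh := inner_scCenter_scCenter hp hq ht
  have hh := norm_scCenter hq hp ht'
  refine ⟨norm_scCenter hp hq ht, hh, fun h => ?_, fun h => ?_⟩
  · rw [h, real_inner_self_eq_norm_sq, hh] at hgh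
    nlinarith
  · rw [h, inner_neg_right, real_inner_self_eq_norm_sq, hh] at hgh
    nlinarith

theorem lThick_scCenter (hp : ‖p‖ = 1) (hq : ‖q‖ = 1) (ht : ⟪p, q⟫ ^ 2 < 1) :
    lThick (scCenter q p) (scCenter p q) = sdist q p := by
  rw [lThick, scCenter_scCenter hp hq ht, scCenter_scCenter hq hp (by rwa [real_inner_comm])]

end scCenter

theorem SphConvex.supports_scCenter {C : Set E3} (hC : SphConvex C) {p q : E3} (hp : p ∈ C)
    (hq : q ∈ C) (ht : ⟪p, q⟫ ^ 2 < 1) (hfar : ∀ z ∈ C, ⟪q, p⟫ ≤ ⟪q, z⟫) :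
    Supports C (scCenter q p) := by
  refine ⟨norm_scCenter (hC.1 p hp) (hC.1 q hq) ht, fun x hx => ⟨hC.1 x hx, ?_⟩, p, hp, ?_⟩
  · rw [inner_scCenter, real_inner_comm q p]
    exact mul_nonneg (inv_nonneg.2 (norm_nonneg _))
      (sub_nonneg.2 (hC.mul_inner_le_inner hp hx hfar))
  · rw [inner_scCenter, real_inner_self_eq_norm_sq, hC.1 p hp, real_inner_comm p q]
    ring

theorem lThick_nonneg (g h : E3) : 0 ≤ lThick g h := arccos_nonneg _

theorem widthAt_le_lThick {C : Set E3} {g h : E3} (hh : Supports C h) (hgh : IsLunePair g h) :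
    widthAt C g ≤ lThick g h :=
  csInf_le ⟨0, by rintro _ ⟨h, -, -, rfl⟩; exact lThick_nonneg g h⟩ ⟨h, hh, hgh, rfl⟩

theorem widthAt_nonneg (C : Set E3) (g : E3) : 0 ≤ widthAt C g :=
  sInf_nonneg (by rintro _ ⟨h, -, -, rfl⟩; exact lThick_nonneg g h)

theorem thickness_le_widthAt {C : Set E3} {g : E3} (hg : Supports C g) :
    thickness C ≤ widthAt C g :=
  csInf_le ⟨0, by rintro _ ⟨g, -, rfl⟩; exact widthAt_nonneg C g⟩ ⟨g, hg, rfl⟩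

theorem IsBody.exists_ne {C : Set E3} (hC : IsBody C) : ∃ x ∈ C, ∃ y ∈ C, x ≠ y := by
  obtain ⟨x, hx, ε, hε, hball⟩ := hC.2.2
  obtain ⟨u, hu, hxu⟩ := exists_norm_eq_one_inner_eq_zero (by simp) x
  set θ := min (ε / 2) 1
  have hθ : 0 < θ := lt_min (half_pos hε) one_pos
  have hθπ : θ ≤ π := (min_le_right _ _).trans (by linarith [pi_gt_three])
  set y := cos θ • x + sin θ • u
  have hy : ‖y‖ = 1 := norm_cos_smul_add_sin_smul hx hu hxu θ
  have hxy : sdist x y = θ := by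
    rw [sdist, inner_add_right, real_inner_smul_right, real_inner_smul_right, hxu,
      real_inner_self_eq_norm_sq, hx, one_pow, mul_one, mul_zero, add_zero,
      arccos_cos hθ.le hθπ]
  refine ⟨x, hball x hx (by rwa [sdist_self hx]), y, hball y hy ?_, fun h => ?_⟩
  · rw [hxy]
    exact (min_le_left _ _).trans_lt (half_lt_self hε)
  · rw [← h, sdist_self hx] at hxy
    exact hθ.ne hxy

theorem IsBody.exists_sdist_max {C : Set E3} (hC : IsBody C) :
    ∃ p ∈ C, ∃ q ∈ C, p ≠ q ∧ ∀ x ∈ C, ∀ y ∈ C, sdist x y ≤ sdist p q := by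
  have hcpt : IsCompact C :=
    (isCompact_sphere (0 : E3) 1).of_isClosed_subset hC.2.1 fun x hx => by
      simpa using hC.1.1 x hx
  obtain ⟨x, hx, y, hy, hxy⟩ := hC.exists_ne
  obtain ⟨⟨p, q⟩, ⟨hp, hq⟩, hmax⟩ := (hcpt.prod hcpt).exists_isMaxOn ⟨(x, x), hx, hx⟩
    (continuous_arccos.comp continuous_inner).continuousOn
  have hmax : ∀ x ∈ C, ∀ y ∈ C, sdist x y ≤ sdist p q := fun x hx y hy =>
    isMaxOn_iff.1 hmax (x, y) ⟨hx, hy⟩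
  refine ⟨p, hp, q, hq, fun hpq => ?_, hmax⟩
  have := hmax x hx y hy
  rw [hpq, sdist_self (hC.1.1 q hq)] at this
  exact (sdist_pos (hC.1.1 x hx) (hC.1.1 y hy) hxy).not_ge this

/-- For every spherically convex body `C`, `Δ(C) ≤ diam(C)`. -/
theorem stmt18 (C : Set E3) (hC : IsBody C) :
    thickness C ≤ sDiam C := by
  obtain ⟨p, hp, q, hq, hpq, hmax⟩ := hC.exists_sdist_max
  have hconv := hC.1
  have hunit := hconv.1
  have ht : ⟪p, q⟫ ^ 2 < 1 := inner_sq_lt_one (hunit p hp) (hunit q hq) hpq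
    fun h => hconv.2.1 q hq (h ▸ hp)
  have hfar_q : ∀ z ∈ C, ⟪q, p⟫ ≤ ⟪q, z⟫ := fun z hz =>
    inner_le_inner_of_sdist_le (hunit q hq) (hunit z hz) (hunit q hq) (hunit p hp)
      (sdist_comm p q ▸ hmax q hq z hz)
  have hfar_p : ∀ z ∈ C, ⟪p, q⟫ ≤ ⟪p, z⟫ := fun z hz =>
    inner_le_inner_of_sdist_le (hunit p hp) (hunit z hz) (hunit p hp) (hunit q hq)
      (hmax p hp z hz)
  calc thickness C ≤ widthAt C (scCenter q p) :=
        thickness_le_widthAt (hconv.supports_scCenter hp hq ht hfar_q)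
    _ ≤ lThick (scCenter q p) (scCenter p q) :=
        widthAt_le_lThick (hconv.supports_scCenter hq hp (by rwa [real_inner_comm]) hfar_p)
          (isLunePair_scCenter (hunit p hp) (hunit q hq) ht)
    _ = sdist q p := lThick_scCenter (hunit p hp) (hunit q hq) ht
    _ ≤ sDiam C := sdist_le_sDiam hq hp
end
end
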